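/- arXiv:2311.16999 — 10 statements merged into one kernel-verified Lean document; each statement's English description precedes it below -/
import Mathlib

section
/- Let Γ : G → R be a partial projective representation of a group G in a unital κ-algebra R with function σ : G × G → κ satisfying the defining axioms. Then for all g, h ∈ G, if σ(g,h) = 0 then Γ(g)Γ(h) = 0. -/
/-!
Write `c = σ(h, h⁻¹)`. Axiom (3) for the pair `(h, h⁻¹)` together with `Γ(1) = 1` gives
`Γ(h)Γ(h⁻¹)Γ(h) = c Γ(h)`. If `c = 0`, axiom (1) for `(h, h⁻¹)` reads `Γ(h) = 0`. Otherwise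
`c⁻¹ Γ(h⁻¹)` is a von Neumann quasi-inverse of `Γ(h)`, so `Γ(g)Γ(h)` vanishes as soon as
`Γ(g)Γ(h)Γ(h⁻¹)` does, and by axiom (3) the latter is `σ(g, h) Γ(gh)Γ(h⁻¹) = 0`.
-/

theorem mul_eq_zero_of_mul_mul_eq_zero_of_mul_mul_eq_smul {κ R : Type*} [Field κ] [Ring R]
    [Module κ R] [SMulCommClass κ R R] {a b c : R} {t : κ} (ht : t ≠ 0)
    (hb : b * c * b = t • b) (habc : a * b * c = 0) : a * b = 0 := by
  have hsmul : t • (a * b) = 0 := by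
    rw [← mul_smul_comm, ← hb, ← mul_assoc, ← mul_assoc, habc, zero_mul]
  exact (smul_eq_zero.mp hsmul).resolve_left ht

section PartialProjectiveRepresentation

variable {κ G R : Type*} [Field κ] [Group G] [Ring R] (Γ : G → R) (σ : G → G → κ)

theorem mul_mul_inv_eq_zero_of_sigma_eq_zero [Module κ R]
    (h3 : ∀ g h : G, Γ g * Γ h * Γ h⁻¹ = σ g h • (Γ (g * h) * Γ h⁻¹))
    {g h : G} (hσ : σ g h = 0) : Γ g * Γ h * Γ h⁻¹ = 0 := by
  rw [h3, hσ, zero_smul]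

theorem mul_inv_mul_self_eq_smul [Module κ R]
    (h3 : ∀ g h : G, Γ g * Γ h * Γ h⁻¹ = σ g h • (Γ (g * h) * Γ h⁻¹)) (h4 : Γ 1 = 1) (h : G) :
    Γ h * Γ h⁻¹ * Γ h = σ h h⁻¹ • Γ h := by
  simpa [h4] using h3 h h⁻¹

theorem eq_zero_of_sigma_inv_eq_zero
    (h1 : ∀ g h : G, σ g h = 0 → Γ g⁻¹ * Γ (g * h) = 0 ∧ Γ (g * h) * Γ h⁻¹ = 0)
    (h4 : Γ 1 = 1) {h : G} (hσ : σ h h⁻¹ = 0) : Γ h = 0 := by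
  simpa [h4] using (h1 h h⁻¹ hσ).2

end PartialProjectiveRepresentation

theorem partialProjRep_sigma_zero_imp_mul_zero_general
    {κ G R : Type*} [Field κ] [Group G] [Ring R] [Algebra κ R]
    (Γ : G → R) (σ : G → G → κ)
    (h1 : ∀ g h : G, σ g h = 0 → Γ g⁻¹ * Γ (g * h) = 0 ∧ Γ (g * h) * Γ h⁻¹ = 0)
    (h3 : ∀ g h : G, Γ g * Γ h * Γ h⁻¹ = σ g h • (Γ (g * h) * Γ h⁻¹))
    (h4 : Γ 1 = 1) :
    ∀ g h : G, σ g h = 0 → Γ g * Γ h = 0 := by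
  intro g h hσ
  by_cases hc : σ h h⁻¹ = 0
  · rw [eq_zero_of_sigma_inv_eq_zero Γ σ h1 h4 hc, mul_zero]
  · exact mul_eq_zero_of_mul_mul_eq_zero_of_mul_mul_eq_smul hc
      (mul_inv_mul_self_eq_smul Γ σ h3 h4 h)
      (mul_mul_inv_eq_zero_of_sigma_eq_zero Γ σ h3 hσ)

/-- If `Γ : G → R` is a partial projective representation of a group `G`
in a unital `κ`-algebra `R` with function `σ : G × G → κ` satisfying the defining axioms
(1)–(4), then `σ(g,h) = 0` implies `Γ(g)Γ(h) = 0`. -/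
theorem partialProjRep_sigma_zero_imp_mul_zero
    {κ G R : Type*} [Field κ] [Group G] [Ring R] [Algebra κ R]
    (Γ : G → R) (σ : G → G → κ)
    (h1 : ∀ g h : G, σ g h = 0 → Γ g⁻¹ * Γ (g * h) = 0 ∧ Γ (g * h) * Γ h⁻¹ = 0)
    (h2 : ∀ g h : G, Γ g⁻¹ * Γ g * Γ h = σ g h • (Γ g⁻¹ * Γ (g * h)))
    (h3 : ∀ g h : G, Γ g * Γ h * Γ h⁻¹ = σ g h • (Γ (g * h) * Γ h⁻¹))
    (h4 : Γ 1 = 1) :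
    ∀ g h : G, σ g h = 0 → Γ g * Γ h = 0 :=
  partialProjRep_sigma_zero_imp_mul_zero_general Γ σ h1 h3 h4
end

section
/- Let Γ : G → R be a partial projective representation with factor set σ. Then σ(g, g⁻¹) = σ(g⁻¹, g) for all g ∈ G. -/
/-! Multiply out `Γ g⁻¹ Γ g Γ g⁻¹` in two ways, with axiom (2) for the pair `(g, g⁻¹)` and with
axiom (3) for `(g⁻¹, g)`; since `Γ 1 = 1` this gives `σ(g,g⁻¹) • Γ g⁻¹ = σ(g⁻¹,g) • Γ g⁻¹`.
If `Γ g⁻¹ ≠ 0` the scalars agree, and if `Γ g⁻¹ = 0` both vanish since then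
`Γ g Γ g⁻¹ = Γ g⁻¹ Γ g = 0`. -/

section PartialProjRep

variable {κ G R : Type*} [Group G] [MulOneClass R] [SMul κ R] {Γ : G → R} {σ : G → G → κ}

theorem inv_mul_mul_inv_eq_sigma_smul
    (h2 : ∀ g h : G, Γ g⁻¹ * Γ g * Γ h = σ g h • (Γ g⁻¹ * Γ (g * h))) (h4 : Γ 1 = 1) (g : G) :
    Γ g⁻¹ * Γ g * Γ g⁻¹ = σ g g⁻¹ • Γ g⁻¹ := by
  simpa [h4] using h2 g g⁻¹

theorem inv_mul_mul_inv_eq_sigma_inv_smul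
    (h3 : ∀ g h : G, Γ g * Γ h * Γ h⁻¹ = σ g h • (Γ (g * h) * Γ h⁻¹)) (h4 : Γ 1 = 1) (g : G) :
    Γ g⁻¹ * Γ g * Γ g⁻¹ = σ g⁻¹ g • Γ g⁻¹ := by
  simpa [h4] using h3 g⁻¹ g

end PartialProjRep

theorem partialProjRep_sigma_inv_symm_general
    {κ G R : Type*} [Field κ] [Group G] [Ring R] [Algebra κ R]
    (Γ : G → R) (σ : G → G → κ)
    (h2 : ∀ g h : G, Γ g⁻¹ * Γ g * Γ h = σ g h • (Γ g⁻¹ * Γ (g * h)))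
    (h3 : ∀ g h : G, Γ g * Γ h * Γ h⁻¹ = σ g h • (Γ (g * h) * Γ h⁻¹))
    (h4 : Γ 1 = 1)
    (hfac : ∀ g h : G, Γ g * Γ h = 0 → σ g h = 0) :
    ∀ g : G, σ g g⁻¹ = σ g⁻¹ g := by
  intro g
  by_cases hz : Γ g⁻¹ = 0
  · rw [hfac g g⁻¹ (by rw [hz, mul_zero]), hfac g⁻¹ g (by rw [hz, zero_mul])]
  · exact smul_left_injective κ hz <| (inv_mul_mul_inv_eq_sigma_smul h2 h4 g).symm.trans
      (inv_mul_mul_inv_eq_sigma_inv_smul h3 h4 g)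

/-- Let `Γ : G → R` be a partial projective representation with factor
set `σ`.  Then `σ(g,g⁻¹) = σ(g⁻¹,g)` for all `g ∈ G`. -/
theorem partialProjRep_sigma_inv_symm
    {κ G R : Type*} [Field κ] [Group G] [Ring R] [Algebra κ R]
    (Γ : G → R) (σ : G → G → κ)
    (h1 : ∀ g h : G, σ g h = 0 → Γ g⁻¹ * Γ (g * h) = 0 ∧ Γ (g * h) * Γ h⁻¹ = 0)
    (h2 : ∀ g h : G, Γ g⁻¹ * Γ g * Γ h = σ g h • (Γ g⁻¹ * Γ (g * h)))
    (h3 : ∀ g h : G, Γ g * Γ h * Γ h⁻¹ = σ g h • (Γ (g * h) * Γ h⁻¹))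
    (h4 : Γ 1 = 1)
    (hfac : ∀ g h : G, Γ g * Γ h = 0 → σ g h = 0) :
    ∀ g : G, σ g g⁻¹ = σ g⁻¹ g :=
  partialProjRep_sigma_inv_symm_general Γ σ h2 h3 h4 hfac
end

section
/- Let ρ be a partial factor set of G over κ such that ρ(g,g⁻¹) ∈ {0,1} for all g ∈ G. Then for all g, h ∈ G with ρ(g,h) ≠ 0, one has ρ(g,h) = ρ(h⁻¹,g⁻¹)⁻¹ and ρ(g,h) = ρ(h, h⁻¹g⁻¹). -/
/-- A partial projective representation of a group `G` in a unital `κ`-algebra,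
together with a factor set `σ` for it. -/
structure PartialProjectiveRep (κ : Type) (G : Type) [Field κ] [Group G] where
  carrier : Type
  [ringCarrier : Ring carrier]
  [algCarrier : Algebra κ carrier]
  Γ : G → carrier
  σ : G → G → κ
  cond1 : ∀ g h : G, σ g h = 0 → Γ g⁻¹ * Γ (g * h) = 0 ∧ Γ (g * h) * Γ h⁻¹ = 0
  cond2 : ∀ g h : G, Γ g⁻¹ * Γ g * Γ h = σ g h • (Γ g⁻¹ * Γ (g * h))
  cond3 : ∀ g h : G, Γ g * Γ h * Γ h⁻¹ = σ g h • (Γ (g * h) * Γ h⁻¹)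
  cond4 : Γ 1 = 1
  factor : ∀ g h : G, Γ g * Γ h = 0 → σ g h = 0

/-- `ρ ∈ pm(G)`: `ρ` is the factor set of some partial projective representation of `G`
in a `κ`-algebra. -/
def IsPartialFactorSet (κ : Type) (G : Type) [Field κ] [Group G] (ρ : G → G → κ) : Prop :=
  ∃ P : PartialProjectiveRep κ G, P.σ = ρ

/-! If `σ(a, b) ≠ 0` then `Γ a ≠ 0`, so `σ(a, a⁻¹) = 1` and `Γ a Γ a⁻¹ Γ a = Γ a`. Inserting this
idempotent into `Γ a Γ b` and applying the axioms twice rescales the nonzero product `Γ a Γ b` by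
`σ(a, b) σ(a⁻¹, ab)`, which is therefore `1`; dually (`g ↦ Γ g⁻¹` in the opposite algebra)
`σ(a, b) σ(ab, b⁻¹) = 1`. For `σ(g, h) ≠ 0` the same computations show that `σ(g⁻¹, gh)`,
`σ(h, h⁻¹g⁻¹)` and `σ(h⁻¹, g⁻¹)` are nonzero, and the three resulting relations give both
identities. -/

attribute [instance] PartialProjectiveRep.ringCarrier PartialProjectiveRep.algCarrier

namespace PartialProjectiveRep

variable {κ G : Type} [Field κ] [Group G] (P : PartialProjectiveRep κ G) {a b : G}

theorem Γ_mul_Γ_ne_zero (h : P.σ a b ≠ 0) : P.Γ a * P.Γ b ≠ 0 :=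
  mt (P.factor a b) h

theorem σ_ne_zero_of_Γ_inv_mul_Γ_mul_ne_zero (h : P.Γ a⁻¹ * P.Γ (a * b) ≠ 0) :
    P.σ a b ≠ 0 :=
  fun h0 => h (P.cond1 a b h0).1

theorem σ_ne_zero_of_Γ_mul_mul_Γ_inv_ne_zero (h : P.Γ (a * b) * P.Γ b⁻¹ ≠ 0) :
    P.σ a b ≠ 0 :=
  fun h0 => h (P.cond1 a b h0).2

theorem σ_mul_inv_self_ne_zero (h : P.Γ a ≠ 0) : P.σ a a⁻¹ ≠ 0 :=
  P.σ_ne_zero_of_Γ_mul_mul_Γ_inv_ne_zero (by rwa [mul_inv_cancel, inv_inv, P.cond4, one_mul])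

/-- Left–right duality: `g ↦ Γ(g⁻¹)` is a partial projective representation in the opposite
algebra, with factor set `(g, h) ↦ σ(h⁻¹, g⁻¹)`. -/
def op : PartialProjectiveRep κ G where
  carrier := P.carrierᵐᵒᵖ
  Γ g := MulOpposite.op (P.Γ g⁻¹)
  σ g h := P.σ h⁻¹ g⁻¹
  cond1 g h h0 := by
    obtain ⟨h1, h2⟩ := P.cond1 h⁻¹ g⁻¹ h0
    rw [inv_inv] at h1 h2
    simp only [inv_inv, mul_inv_rev, ← MulOpposite.op_mul, MulOpposite.op_eq_zero_iff]
    exact ⟨h2, h1⟩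
  cond2 g h := by
    have := P.cond3 h⁻¹ g⁻¹
    rw [inv_inv] at this
    simp only [inv_inv, mul_inv_rev, ← MulOpposite.op_mul, ← MulOpposite.op_smul, ← mul_assoc,
      this]
  cond3 g h := by
    have := P.cond2 h⁻¹ g⁻¹
    rw [inv_inv] at this
    simp only [inv_inv, mul_inv_rev, ← MulOpposite.op_mul, ← MulOpposite.op_smul, ← mul_assoc,
      this]
  cond4 := by simp only [inv_one, P.cond4, MulOpposite.op_one]
  factor g h h0 := P.factor h⁻¹ g⁻¹ (by simpa [← MulOpposite.op_mul] using h0)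

@[simp]
theorem op_σ (g h : G) : P.op.σ g h = P.σ h⁻¹ g⁻¹ := rfl

theorem Γ_mul_Γ_inv_mul_Γ (hP : ∀ g, P.σ g g⁻¹ = 0 ∨ P.σ g g⁻¹ = 1) (h : P.Γ a ≠ 0) :
    P.Γ a * P.Γ a⁻¹ * P.Γ a = P.Γ a := by
  have h1 : P.σ a a⁻¹ = 1 := (hP a).resolve_left (P.σ_mul_inv_self_ne_zero h)
  simpa [h1, P.cond4] using P.cond3 a a⁻¹

theorem Γ_mul_Γ_eq_smul (hP : ∀ g, P.σ g g⁻¹ = 0 ∨ P.σ g g⁻¹ = 1) (h : P.σ a b ≠ 0) :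
    P.Γ a * P.Γ b = P.σ a b • (P.Γ a * (P.Γ a⁻¹ * P.Γ (a * b))) := by
  have hΓa : P.Γ a ≠ 0 := left_ne_zero_of_mul (P.Γ_mul_Γ_ne_zero h)
  calc P.Γ a * P.Γ b = P.Γ a * (P.Γ a⁻¹ * P.Γ a * P.Γ b) := by
        rw [← mul_assoc, ← mul_assoc, P.Γ_mul_Γ_inv_mul_Γ hP hΓa]
    _ = P.σ a b • (P.Γ a * (P.Γ a⁻¹ * P.Γ (a * b))) := by rw [P.cond2, mul_smul_comm]

theorem Γ_inv_mul_Γ_mul_ne_zero (hP : ∀ g, P.σ g g⁻¹ = 0 ∨ P.σ g g⁻¹ = 1)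
    (h : P.σ a b ≠ 0) : P.Γ a⁻¹ * P.Γ (a * b) ≠ 0 := by
  intro h0
  apply P.Γ_mul_Γ_ne_zero h
  rw [P.Γ_mul_Γ_eq_smul hP h, h0, mul_zero, smul_zero]

theorem σ_mul_σ_inv_mul (hP : ∀ g, P.σ g g⁻¹ = 0 ∨ P.σ g g⁻¹ = 1) (h : P.σ a b ≠ 0) :
    P.σ a b * P.σ a⁻¹ (a * b) = 1 := by
  have hback := P.cond2 a⁻¹ (a * b)
  rw [inv_inv, inv_mul_cancel_left, mul_assoc] at hback
  refine smul_left_injective κ (P.Γ_mul_Γ_ne_zero h) ?_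
  change (P.σ a b * P.σ a⁻¹ (a * b)) • (P.Γ a * P.Γ b) = (1 : κ) • (P.Γ a * P.Γ b)
  rw [mul_smul, ← hback, one_smul, ← P.Γ_mul_Γ_eq_smul hP h]

theorem Γ_mul_mul_Γ_inv_ne_zero (hP : ∀ g, P.σ g g⁻¹ = 0 ∨ P.σ g g⁻¹ = 1)
    (h : P.σ a b ≠ 0) : P.Γ (a * b) * P.Γ b⁻¹ ≠ 0 := by
  have := P.op.Γ_inv_mul_Γ_mul_ne_zero (by simpa using hP) (a := b⁻¹) (b := a⁻¹)
    (by simpa using h)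
  intro h0
  apply this
  change MulOpposite.op (P.Γ b⁻¹⁻¹⁻¹) * MulOpposite.op (P.Γ (b⁻¹ * a⁻¹)⁻¹) = 0
  rw [← MulOpposite.op_mul, inv_inv, mul_inv_rev, inv_inv, inv_inv, h0, MulOpposite.op_zero]

theorem σ_mul_σ_mul_inv (hP : ∀ g, P.σ g g⁻¹ = 0 ∨ P.σ g g⁻¹ = 1) (h : P.σ a b ≠ 0) :
    P.σ a b * P.σ (a * b) b⁻¹ = 1 := by
  simpa using P.op.σ_mul_σ_inv_mul (by simpa using hP) (a := b⁻¹) (b := a⁻¹) (by simpa using h)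

end PartialProjectiveRep

/-- Let `ρ` be a partial factor set of `G` over `κ` such that
`ρ(g,g⁻¹) ∈ {0,1}` for all `g ∈ G`.  Then for all `g, h` with `ρ(g,h) ≠ 0` one has
`ρ(g,h) = ρ(h⁻¹,g⁻¹)⁻¹` and `ρ(g,h) = ρ(h, h⁻¹g⁻¹)`. -/
theorem partialFactorSet_good_identities
    {κ G : Type} [Field κ] [Group G] (ρ : G → G → κ)
    (hpm : IsPartialFactorSet κ G ρ)
    (h01 : ∀ g : G, ρ g g⁻¹ = 0 ∨ ρ g g⁻¹ = 1) :
    ∀ g h : G, ρ g h ≠ 0 →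
      ρ g h = (ρ h⁻¹ g⁻¹)⁻¹ ∧ ρ g h = ρ h (h⁻¹ * g⁻¹) := by
  obtain ⟨P, rfl⟩ := hpm
  intro g h hgh
  have hA : P.σ g h * P.σ g⁻¹ (g * h) = 1 := P.σ_mul_σ_inv_mul h01 hgh
  have hμ : P.σ h (h⁻¹ * g⁻¹) ≠ 0 :=
    P.σ_ne_zero_of_Γ_mul_mul_Γ_inv_ne_zero (by simpa using P.Γ_inv_mul_Γ_mul_ne_zero h01 hgh)
  have hν : P.σ h⁻¹ g⁻¹ ≠ 0 :=
    P.σ_ne_zero_of_Γ_inv_mul_Γ_mul_ne_zero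
      (by simpa using P.Γ_mul_mul_Γ_inv_ne_zero h01 (right_ne_zero_of_mul_eq_one hA))
  have hB : P.σ h (h⁻¹ * g⁻¹) * P.σ g⁻¹ (g * h) = 1 := by
    simpa using P.σ_mul_σ_mul_inv h01 hμ
  have hC : P.σ h⁻¹ g⁻¹ * P.σ h (h⁻¹ * g⁻¹) = 1 := by
    simpa using P.σ_mul_σ_inv_mul h01 hν
  have hgh_eq : P.σ g h = P.σ h (h⁻¹ * g⁻¹) :=
    (eq_inv_of_mul_eq_one_left hA).trans (eq_inv_of_mul_eq_one_left hB).symm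
  exact ⟨hgh_eq.trans (eq_inv_of_mul_eq_one_right hC), hgh_eq⟩
end

section
/- If ρ is a partial factor set of G over κ, then the map ρ* defined by ρ*(g,h) = ρ(h⁻¹,g⁻¹) is also a partial factor set of G, and there exists a surjective κ-algebra homomorphism κ_par^{ρ*}G → (κ_par^ρ G)^{op} sending [g]^{ρ*} to [g⁻¹]^ρ. -/
/-- The defining relations of the twisted partial group algebra `κ_par^σ G`. -/
inductive TPGARel (κ : Type) (G : Type) [Field κ] [Group G] (σ : G → G → κ) :
    FreeAlgebra κ G → FreeAlgebra κ G → Prop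
  | zero_left {g h : G} : σ g h = 0 →
      TPGARel κ G σ (FreeAlgebra.ι κ g⁻¹ * FreeAlgebra.ι κ (g * h)) 0
  | zero_right {g h : G} : σ g h = 0 →
      TPGARel κ G σ (FreeAlgebra.ι κ (g * h) * FreeAlgebra.ι κ h⁻¹) 0
  | left (g h : G) :
      TPGARel κ G σ (FreeAlgebra.ι κ g⁻¹ * FreeAlgebra.ι κ g * FreeAlgebra.ι κ h)
        (σ g h • (FreeAlgebra.ι κ g⁻¹ * FreeAlgebra.ι κ (g * h)))
  | right (g h : G) :
      TPGARel κ G σ (FreeAlgebra.ι κ g * FreeAlgebra.ι κ h * FreeAlgebra.ι κ h⁻¹)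
        (σ g h • (FreeAlgebra.ι κ (g * h) * FreeAlgebra.ι κ h⁻¹))
  | mul_one (g : G) :
      TPGARel κ G σ (FreeAlgebra.ι κ g * FreeAlgebra.ι κ 1) (FreeAlgebra.ι κ g)
  | one_mul (g : G) :
      TPGARel κ G σ (FreeAlgebra.ι κ 1 * FreeAlgebra.ι κ g) (FreeAlgebra.ι κ g)

/-- The twisted partial group algebra `κ_par^σ G`. -/
abbrev TwistedPartialGroupAlgebra (κ : Type) (G : Type) [Field κ] [Group G]
    (σ : G → G → κ) : Type :=
  RingQuot (TPGARel κ G σ)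

/-- The canonical generator `[g]^σ` of `κ_par^σ G`. -/
def tpgaGen (κ : Type) (G : Type) [Field κ] [Group G] (σ : G → G → κ) (g : G) :
    TwistedPartialGroupAlgebra κ G σ :=
  RingQuot.mkAlgHom κ (TPGARel κ G σ) (FreeAlgebra.ι κ g)

/-!
If `Γ` satisfies the relations of `κ_par^ρ G` in an algebra `A`, then `g ↦ op (Γ g⁻¹)` satisfies
those of `κ_par^{ρ*} G` in `Aᵐᵒᵖ`: reversing products and inverting group elements exchanges
the two three-term relations and the two vanishing relations, with `ρ(g,h)` replaced by
`ρ(h⁻¹,g⁻¹)`. Applied to a partial projective representation with factor set `ρ` this shows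
`ρ* ∈ pm(G)`; applied to the generators of `κ_par^ρ G` it gives the homomorphism by the
universal property, which is onto because its image contains every generator `op [g]^ρ`.
-/

section Relations

variable {κ G : Type} {A : Type*} [Field κ] [Group G] [Ring A] [Algebra κ A]

structure SatisfiesTPGARel (σ : G → G → κ) (Γ : G → A) : Prop where
  zero_left {g h : G} : σ g h = 0 → Γ g⁻¹ * Γ (g * h) = 0
  zero_right {g h : G} : σ g h = 0 → Γ (g * h) * Γ h⁻¹ = 0
  left (g h : G) : Γ g⁻¹ * Γ g * Γ h = σ g h • (Γ g⁻¹ * Γ (g * h))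
  right (g h : G) : Γ g * Γ h * Γ h⁻¹ = σ g h • (Γ (g * h) * Γ h⁻¹)
  mul_one (g : G) : Γ g * Γ 1 = Γ g
  one_mul (g : G) : Γ 1 * Γ g = Γ g

namespace SatisfiesTPGARel

variable {σ : G → G → κ} {Γ : G → A}

theorem opInv (hΓ : SatisfiesTPGARel σ Γ) :
    SatisfiesTPGARel (fun g h => σ h⁻¹ g⁻¹) (fun g => MulOpposite.op (Γ g⁻¹)) where
  zero_left {g h} h0 := by
    simpa [← MulOpposite.op_mul] using congrArg MulOpposite.op (hΓ.zero_right h0)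
  zero_right {g h} h0 := by
    simpa [← MulOpposite.op_mul] using congrArg MulOpposite.op (hΓ.zero_left h0)
  left g h := by
    simpa [← MulOpposite.op_mul, ← MulOpposite.op_smul, mul_assoc]
      using congrArg MulOpposite.op (hΓ.right h⁻¹ g⁻¹)
  right g h := by
    simpa [← MulOpposite.op_mul, ← MulOpposite.op_smul, mul_assoc]
      using congrArg MulOpposite.op (hΓ.left h⁻¹ g⁻¹)
  mul_one g := by simpa [← MulOpposite.op_mul] using congrArg MulOpposite.op (hΓ.one_mul g⁻¹)
  one_mul g := by simpa [← MulOpposite.op_mul] using congrArg MulOpposite.op (hΓ.mul_one g⁻¹)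

theorem lift_eq_of_tpgaRel (hΓ : SatisfiesTPGARel σ Γ) {x y : FreeAlgebra κ G}
    (hxy : TPGARel κ G σ x y) : FreeAlgebra.lift κ Γ x = FreeAlgebra.lift κ Γ y := by
  cases hxy with
  | zero_left h0 => simpa using hΓ.zero_left h0
  | zero_right h0 => simpa using hΓ.zero_right h0
  | left g h => simpa using hΓ.left g h
  | right g h => simpa using hΓ.right g h
  | mul_one g => simpa using hΓ.mul_one g
  | one_mul g => simpa using hΓ.one_mul g

end SatisfiesTPGARel

end Relations

namespace PartialProjectiveRep

attribute [instance] ringCarrier algCarrier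

variable {κ G : Type} [Field κ] [Group G]

theorem satisfiesTPGARel (P : PartialProjectiveRep κ G) : SatisfiesTPGARel P.σ P.Γ where
  zero_left h0 := (P.cond1 _ _ h0).1
  zero_right h0 := (P.cond1 _ _ h0).2
  left := P.cond2
  right := P.cond3
  mul_one g := by rw [P.cond4, _root_.mul_one]
  one_mul g := by rw [P.cond4, _root_.one_mul]

def opInv (P : PartialProjectiveRep κ G) : PartialProjectiveRep κ G where
  carrier := P.carrierᵐᵒᵖ
  Γ g := MulOpposite.op (P.Γ g⁻¹)
  σ g h := P.σ h⁻¹ g⁻¹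
  cond1 _ _ h0 := ⟨P.satisfiesTPGARel.opInv.zero_left h0, P.satisfiesTPGARel.opInv.zero_right h0⟩
  cond2 := P.satisfiesTPGARel.opInv.left
  cond3 := P.satisfiesTPGARel.opInv.right
  cond4 := by simp [P.cond4]
  factor g h hgh := P.factor _ _ <| by
    simpa [← MulOpposite.op_mul] using congrArg MulOpposite.unop hgh

end PartialProjectiveRep

theorem IsPartialFactorSet.star {κ G : Type} [Field κ] [Group G] {ρ : G → G → κ}
    (hρ : IsPartialFactorSet κ G ρ) : IsPartialFactorSet κ G (fun g h => ρ h⁻¹ g⁻¹) := by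
  obtain ⟨P, rfl⟩ := hρ
  exact ⟨P.opInv, rfl⟩

namespace TwistedPartialGroupAlgebra

variable {κ G : Type} [Field κ] [Group G] {σ : G → G → κ}

theorem satisfiesTPGARel_tpgaGen : SatisfiesTPGARel σ (tpgaGen κ G σ) := by
  have rel {x y : FreeAlgebra κ G} (h : TPGARel κ G σ x y) :=
    RingQuot.mkAlgHom_rel κ h
  exact {
    zero_left := fun h0 => by simpa [tpgaGen] using rel (.zero_left h0)
    zero_right := fun h0 => by simpa [tpgaGen] using rel (.zero_right h0)
    left := fun g h => by simpa [tpgaGen] using rel (.left g h)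
    right := fun g h => by simpa [tpgaGen] using rel (.right g h)
    mul_one := fun g => by simpa [tpgaGen] using rel (.mul_one g)
    one_mul := fun g => by simpa [tpgaGen] using rel (.one_mul g) }

variable {A : Type*} [Ring A] [Algebra κ A]

def lift {Γ : G → A} (hΓ : SatisfiesTPGARel σ Γ) : TwistedPartialGroupAlgebra κ G σ →ₐ[κ] A :=
  RingQuot.liftAlgHom κ ⟨FreeAlgebra.lift κ Γ, fun _ _ => hΓ.lift_eq_of_tpgaRel⟩

@[simp]
theorem lift_tpgaGen {Γ : G → A} (hΓ : SatisfiesTPGARel σ Γ) (g : G) :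
    lift hΓ (tpgaGen κ G σ g) = Γ g := by
  simp [lift, tpgaGen]

@[elab_as_elim]
theorem induction {p : TwistedPartialGroupAlgebra κ G σ → Prop}
    (algebraMap : ∀ r : κ, p (algebraMap κ _ r)) (tpgaGen : ∀ g, p (tpgaGen κ G σ g))
    (add : ∀ x y, p x → p y → p (x + y)) (mul : ∀ x y, p x → p y → p (x * y))
    (x : TwistedPartialGroupAlgebra κ G σ) : p x := by
  obtain ⟨x, rfl⟩ := RingQuot.mkAlgHom_surjective κ (TPGARel κ G σ) x
  induction x using FreeAlgebra.induction with
  | grade0 r => simpa using algebraMap r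
  | grade1 g => exact tpgaGen g
  | add x y hx hy => simpa using add _ _ hx hy
  | mul x y hx hy => simpa using mul _ _ hx hy

theorem lift_opInv_surjective :
    Function.Surjective (lift (σ := fun g h => σ h⁻¹ g⁻¹) satisfiesTPGARel_tpgaGen.opInv) := by
  intro x
  induction x using MulOpposite.rec' with | h x => ?_
  change MulOpposite.op x ∈ (lift satisfiesTPGARel_tpgaGen.opInv).range
  induction x using induction with
  | algebraMap r => exact ⟨algebraMap κ _ r, by simp⟩
  | tpgaGen g => exact ⟨tpgaGen κ G _ g⁻¹, by simp⟩
  | add x y hx hy => simpa using add_mem hx hy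
  | mul x y hx hy => simpa using mul_mem hy hx

end TwistedPartialGroupAlgebra

open TwistedPartialGroupAlgebra in
/-- If `ρ` is a partial factor set of `G` over `κ`, then
`ρ*(g,h) = ρ(h⁻¹,g⁻¹)` is also a partial factor set of `G`, and there exists a surjective
`κ`-algebra homomorphism `κ_par^{ρ*}G → (κ_par^ρ G)ᵒᵖ` sending `[g]^{ρ*}` to `[g⁻¹]^ρ`. -/
theorem partialFactorSet_involution
    {κ G : Type} [Field κ] [Group G] (ρ : G → G → κ)
    (hpm : IsPartialFactorSet κ G ρ) :
    IsPartialFactorSet κ G (fun g h => ρ h⁻¹ g⁻¹) ∧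
    ∃ f : TwistedPartialGroupAlgebra κ G (fun g h => ρ h⁻¹ g⁻¹) →ₐ[κ]
        (TwistedPartialGroupAlgebra κ G ρ)ᵐᵒᵖ,
      Function.Surjective f ∧
      ∀ g : G, f (tpgaGen κ G (fun g h => ρ h⁻¹ g⁻¹) g) =
        MulOpposite.op (tpgaGen κ G ρ g⁻¹) :=
  ⟨hpm.star, lift satisfiesTPGARel_tpgaGen.opInv, lift_opInv_surjective,
    lift_tpgaGen satisfiesTPGARel_tpgaGen.opInv⟩
end

section
/- Let θ be a unital partial action of a group G on a κ-algebra A and ς a κ-based partial 2-cocycle with corresponding κ-valued twist σ. Then the map Γ_σ : G → A ∗_{θ,ς} G given by g ↦ 1_g δ_g is a partial projective representation of G with factor set σ. -/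
/-- A unital partial action `θ` of a group `G` on a unital `κ`-algebra `A`.
The ideal `D_g` is the ideal generated by the central idempotent `e g`, and
`θ g : D_{g⁻¹} → D_g` is encoded as a `κ`-linear map `A → A` which only depends on
the component `e g⁻¹ * a` and whose image lies in `D_g`. -/
structure IsUnitalPartialAction (κ : Type) {G A : Type} [Field κ] [Group G]
    [Ring A] [Algebra κ A] (e : G → A) (θ : G → A → A) : Prop where
  central : ∀ (g : G) (a : A), e g * a = a * e g
  idem : ∀ g : G, e g * e g = e g
  unit_one : e 1 = 1
  lin : ∀ g : G, IsLinearMap κ (θ g)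
  dom : ∀ (g : G) (a : A), θ g a = θ g (e g⁻¹ * a)
  range : ∀ (g : G) (a : A), e g * θ g a = θ g a
  mul : ∀ (g : G) (a b : A),
    θ g (e g⁻¹ * (a * b)) = θ g (e g⁻¹ * a) * θ g (e g⁻¹ * b)
  map_one' : ∀ a : A, θ 1 a = a
  unit_map : ∀ g h : G, θ g (e g⁻¹ * e h) = e g * e (g * h)
  comp : ∀ (g h : G) (a : A),
    θ g (θ h (e h⁻¹ * (e (g * h)⁻¹ * a))) = θ (g * h) (e h⁻¹ * (e (g * h)⁻¹ * a))
  inv : ∀ (g : G) (a : A), θ g⁻¹ (θ g (e g⁻¹ * a)) = e g⁻¹ * a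

/-- `σ : G × G → κ` is the `κ`-valued twist of the unital partial action with
idempotents `e`, corresponding to the `κ`-based partial 2-cocycle
`ς(g,h) = σ(g,h) • (e g * e (g*h))`. -/
structure IsKValuedTwist (κ : Type) {G A : Type} [Field κ] [Group G]
    [Ring A] [Algebra κ A] (e : G → A) (σ : G → G → κ) : Prop where
  zero_iff : ∀ g h : G, σ g h = 0 ↔ e g * e (g * h) = 0
  cocycle : ∀ g h t : G, e g * e (g * h) * e (g * h * t) ≠ 0 →
    σ g h * σ (g * h) t = σ g (h * t) * σ h t
  one_left : ∀ g : G, e g ≠ 0 → σ 1 g = 1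
  one_right : ∀ g : G, e g ≠ 0 → σ g 1 = 1

/-- `(Λ, δ)` is a realization of the crossed product `A ∗_{θ,σ} G = ⊕_g D_g δ_g`:
`δ g a` represents the element `(e g * a) δ_g`, the `δ g` are `κ`-linear, the assignment
is multiplicative for the crossed-product multiplication
`(a δ_g)(b δ_h) = σ(g,h) a θ_g(1_{g⁻¹} b) δ_{gh}`, the sum `⊕_g D_g δ_g` is direct and
spans `Λ`, and `1_Λ = 1_A δ_1`. -/
structure IsCrossedProduct (κ : Type) {G A : Type} [Field κ] [Group G]
    [Ring A] [Algebra κ A] (e : G → A) (θ : G → A → A) (σ : G → G → κ)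
    (Λ : Type) [Ring Λ] [Algebra κ Λ] (δ : G → A → Λ) : Prop where
  lin : ∀ g : G, IsLinearMap κ (δ g)
  proj : ∀ (g : G) (a : A), δ g a = δ g (e g * a)
  unit : δ 1 1 = 1
  mul : ∀ (g h : G) (a b : A),
    δ g (e g * a) * δ h (e h * b) =
      σ g h • δ (g * h) (e g * a * θ g (e g⁻¹ * (e h * b)))
  indep : ∀ (s : Finset G) (a : G → A), (∀ g : G, e g * a g = a g) →
    (∑ g ∈ s, δ g (a g)) = 0 → ∀ g ∈ s, a g = 0
  span : ∀ x : Λ, ∃ (s : Finset G) (a : G → A),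
    (∀ g : G, e g * a g = a g) ∧ x = ∑ g ∈ s, δ g (a g)

/-!
Everything follows from one product formula in the crossed product: since
`θ_g(1_{g⁻¹} 1_h) = 1_g 1_{gh}`, we get `(1_g δ_g)(1_h δ_h) = σ(g,h) 1_g 1_{gh} δ_{gh}`.
The two three-term identities then reduce to comparing scalars, which for
`Γ(g⁻¹)Γ(g)Γ(h)` is the cocycle identity at `(g⁻¹, g, h)`, and the vanishing
statements follow from `σ(g,h) = 0 ↔ 1_g 1_{gh} = 0` and the directness of `⊕_g D_g δ_g`.
-/

namespace IsUnitalPartialAction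

variable {κ G A : Type} [Field κ] [Group G] [Ring A] [Algebra κ A] {e : G → A} {θ : G → A → A}

theorem idem_mul_comm (hθ : IsUnitalPartialAction κ e θ) (k l : G) :
    e k * e l = e l * e k :=
  hθ.central k (e l)

theorem map_zero (hθ : IsUnitalPartialAction κ e θ) (g : G) : θ g 0 = 0 :=
  (IsLinearMap.mk' (θ g) (hθ.lin g)).map_zero

theorem idem_inv_mul_eq_zero (hθ : IsUnitalPartialAction κ e θ) {g h : G}
    (h0 : e g * e (g * h) = 0) : e g⁻¹ * e h = 0 := by
  have := hθ.unit_map g⁻¹ (g * h)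
  rwa [inv_inv, inv_mul_cancel_left, h0, hθ.map_zero, eq_comm] at this

theorem isIdempotentElem_idem_mul (hθ : IsUnitalPartialAction κ e θ) (k l : G) :
    IsIdempotentElem (e k * e l) :=
  IsIdempotentElem.mul_of_commute (hθ.idem_mul_comm k l) (hθ.idem k) (hθ.idem l)

end IsUnitalPartialAction

namespace IsCrossedProduct

variable {κ G A : Type} [Field κ] [Group G] [Ring A] [Algebra κ A]
  {e : G → A} {θ : G → A → A} {σ : G → G → κ}
  {Λ : Type} [Ring Λ] [Algebra κ Λ] {δ : G → A → Λ}

theorem map_zero (hΛ : IsCrossedProduct κ e θ σ Λ δ) (g : G) : δ g 0 = 0 :=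
  (IsLinearMap.mk' (δ g) (hΛ.lin g)).map_zero

theorem idem_mul_eq_zero_of_eq_zero (hΛ : IsCrossedProduct κ e θ σ Λ δ)
    (hθ : IsUnitalPartialAction κ e θ) {g : G} {a : A} (h0 : δ g a = 0) : e g * a = 0 :=
  hΛ.indep {g} (fun t => e t * a) (fun t => by rw [← mul_assoc, hθ.idem])
    (by rwa [Finset.sum_singleton, ← hΛ.proj]) g (Finset.mem_singleton_self g)

theorem mul_apply_idem (hΛ : IsCrossedProduct κ e θ σ Λ δ)
    (hθ : IsUnitalPartialAction κ e θ) (g h : G) (a : A) :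
    δ g a * δ h (e h) = σ g h • δ (g * h) (e g * a * (e g * e (g * h))) := by
  rw [hΛ.proj g a, hΛ.proj h, hΛ.mul, hθ.idem, hθ.unit_map]

theorem apply_idem_mul_apply_idem (hΛ : IsCrossedProduct κ e θ σ Λ δ)
    (hθ : IsUnitalPartialAction κ e θ) (g h : G) :
    δ g (e g) * δ h (e h) = σ g h • δ (g * h) (e g * e (g * h)) := by
  rw [hΛ.mul_apply_idem hθ, ← mul_assoc, hθ.idem, hθ.idem]

variable (hΛ : IsCrossedProduct κ e θ σ Λ δ) (hθ : IsUnitalPartialAction κ e θ)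
include hΛ hθ

theorem apply_idem_mul_eq_zero_of_twist_eq_zero (hσ : IsKValuedTwist κ e σ) {g h : G}
    (h0 : σ g h = 0) :
    δ g⁻¹ (e g⁻¹) * δ (g * h) (e (g * h)) = 0 ∧
      δ (g * h) (e (g * h)) * δ h⁻¹ (e h⁻¹) = 0 := by
  have hz : e g * e (g * h) = 0 := (hσ.zero_iff g h).mp h0
  constructor
  · rw [hΛ.apply_idem_mul_apply_idem hθ, inv_mul_cancel_left, hθ.idem_inv_mul_eq_zero hz,
      hΛ.map_zero, smul_zero]
  · rw [hΛ.apply_idem_mul_apply_idem hθ, mul_inv_cancel_right, hθ.idem_mul_comm, hz,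
      hΛ.map_zero, smul_zero]

theorem apply_idem_inv_mul_mul (hσ : IsKValuedTwist κ e σ) (g h : G) :
    δ g⁻¹ (e g⁻¹) * δ g (e g) * δ h (e h) =
      σ g h • (δ g⁻¹ (e g⁻¹) * δ (g * h) (e (g * h))) := by
  have lhs : δ g⁻¹ (e g⁻¹) * δ g (e g) * δ h (e h) =
      (σ g⁻¹ g * σ 1 h) • δ h (e g⁻¹ * e h) := by
    rw [hΛ.apply_idem_mul_apply_idem hθ, inv_mul_cancel, hθ.unit_one, mul_one, smul_mul_assoc,
      hΛ.mul_apply_idem hθ, hθ.unit_one]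
    simp only [one_mul, smul_smul]
  rw [lhs, hΛ.apply_idem_mul_apply_idem hθ, inv_mul_cancel_left, smul_smul]
  by_cases hz : e g⁻¹ * e h = 0
  · rw [hz, hΛ.map_zero, smul_zero, smul_zero]
  · have hc := hσ.cocycle g⁻¹ g h (by simpa [hθ.unit_one] using hz)
    simp only [inv_mul_cancel] at hc
    rw [hc, mul_comm]

theorem mul_apply_idem_mul_inv (g h : G) :
    δ g (e g) * δ h (e h) * δ h⁻¹ (e h⁻¹) =
      σ g h • (δ (g * h) (e (g * h)) * δ h⁻¹ (e h⁻¹)) := by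
  rw [hΛ.apply_idem_mul_apply_idem hθ g h, smul_mul_assoc, hΛ.mul_apply_idem hθ,
    hΛ.apply_idem_mul_apply_idem hθ (g * h), mul_inv_cancel_right,
    hθ.idem_mul_comm g, ← mul_assoc (e (g * h)) (e (g * h)), hθ.idem,
    (hθ.isIdempotentElem_idem_mul _ _).eq]

theorem twist_eq_zero_of_apply_idem_mul_eq_zero (hσ : IsKValuedTwist κ e σ) {g h : G}
    (h0 : δ g (e g) * δ h (e h) = 0) : σ g h = 0 := by
  rw [hΛ.apply_idem_mul_apply_idem hθ] at h0
  refine (smul_eq_zero.mp h0).elim id fun hd => ?_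
  have hproj := hΛ.idem_mul_eq_zero_of_eq_zero hθ hd
  rw [hσ.zero_iff, ← hproj, ← mul_assoc, hθ.idem_mul_comm (g * h), mul_assoc, hθ.idem]

end IsCrossedProduct

/-- Let `θ` be a unital partial action of `G` on `A` with `κ`-based
partial 2-cocycle whose corresponding `κ`-valued twist is `σ`.  Then in the crossed
product `A ∗_{θ,ς} G` the map `Γ_σ : g ↦ 1_g δ_g` is a partial projective representation
of `G` with factor set `σ`. -/
theorem crossedProduct_canonical_partial_projective_rep
    {κ G A : Type} [Field κ] [Group G] [Ring A] [Algebra κ A]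
    (e : G → A) (θ : G → A → A) (σ : G → G → κ)
    (hθ : IsUnitalPartialAction κ e θ) (hσ : IsKValuedTwist κ e σ)
    (Λ : Type) [Ring Λ] [Algebra κ Λ] (δ : G → A → Λ)
    (hΛ : IsCrossedProduct κ e θ σ Λ δ)
    (Γ : G → Λ) (hΓ : ∀ g : G, Γ g = δ g (e g)) :
    (∀ g h : G, σ g h = 0 → Γ g⁻¹ * Γ (g * h) = 0 ∧ Γ (g * h) * Γ h⁻¹ = 0) ∧
    (∀ g h : G, Γ g⁻¹ * Γ g * Γ h = σ g h • (Γ g⁻¹ * Γ (g * h))) ∧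
    (∀ g h : G, Γ g * Γ h * Γ h⁻¹ = σ g h • (Γ (g * h) * Γ h⁻¹)) ∧
    (Γ 1 = 1) ∧
    (∀ g h : G, Γ g * Γ h = 0 → σ g h = 0) := by
  simp only [hΓ]
  refine ⟨fun g h => hΛ.apply_idem_mul_eq_zero_of_twist_eq_zero hθ hσ,
    hΛ.apply_idem_inv_mul_mul hθ hσ, hΛ.mul_apply_idem_mul_inv hθ, ?_,
    fun g h => hΛ.twist_eq_zero_of_apply_idem_mul_eq_zero hθ hσ⟩
  rw [hθ.unit_one, hΛ.unit]
end

section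
/- Let θ be a unital partial action of G on A with κ-valued twist σ, and (π, Γ) a covariant σ-representation of θ in a unital κ-algebra R. Then the map π × Γ : A ∗_{θ,σ} G → R determined by a δ_g ↦ π(a)Γ(g) is a homomorphism of κ-algebras. -/
/-- `Γ : G → R` is a partial projective representation with factor set `σ`. -/
structure IsPartialProjRepWithFactorSet (κ : Type) {G R : Type} [Field κ] [Group G]
    [Ring R] [Algebra κ R] (Γ : G → R) (σ : G → G → κ) : Prop where
  cond1 : ∀ g h : G, σ g h = 0 → Γ g⁻¹ * Γ (g * h) = 0 ∧ Γ (g * h) * Γ h⁻¹ = 0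
  cond2 : ∀ g h : G, Γ g⁻¹ * Γ g * Γ h = σ g h • (Γ g⁻¹ * Γ (g * h))
  cond3 : ∀ g h : G, Γ g * Γ h * Γ h⁻¹ = σ g h • (Γ (g * h) * Γ h⁻¹)
  cond4 : Γ 1 = 1
  factor : ∀ g h : G, Γ g * Γ h = 0 → σ g h = 0

section Aux

variable {κ G A R : Type} [Field κ] [Group G] [Ring A] [Algebra κ A]
  [Ring R] [Algebra κ R]
  {e : G → A} {θ : G → A → A} {σ : G → G → κ}

private lemma kcancel {c : κ} {x y : R} (hc : c ≠ 0) (h : c • x = c • y) : x = y := by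
  rw [← inv_smul_smul₀ hc x, h, inv_smul_smul₀ hc]

private lemma theta_zero (hθ : IsUnitalPartialAction κ e θ) (g : G) : θ g 0 = 0 := by
  have h := (hθ.lin g).map_smul 0 (0 : A)
  simpa using h

private lemma e_of_e_inv (hθ : IsUnitalPartialAction κ e θ) (g : G) (h : e g⁻¹ = 0) :
    e g = 0 := by
  have h1 := hθ.unit_map g g⁻¹
  rw [h, mul_zero, theta_zero hθ, mul_inv_cancel, hθ.unit_one, mul_one] at h1
  exact h1.symm

private lemma e_inv_of_e (hθ : IsUnitalPartialAction κ e θ) (g : G) (h : e g = 0) :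
    e g⁻¹ = 0 := by
  have := e_of_e_inv hθ g⁻¹ (by rwa [inv_inv])
  exact this

private lemma sigma_gg_ne (hθ : IsUnitalPartialAction κ e θ) (hσ : IsKValuedTwist κ e σ)
    {g : G} (hg : e g ≠ 0) : σ g g⁻¹ ≠ 0 := by
  intro h
  apply hg
  have := (hσ.zero_iff g g⁻¹).1 h
  rwa [mul_inv_cancel, hθ.unit_one, mul_one] at this

private lemma sigma_inv_ne (hθ : IsUnitalPartialAction κ e θ) (hσ : IsKValuedTwist κ e σ)
    {g : G} (hg : e g ≠ 0) : σ g⁻¹ g ≠ 0 := by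
  intro h
  have hinv : e g⁻¹ ≠ 0 := fun hz => hg (e_of_e_inv hθ g hz)
  apply hinv
  have := (hσ.zero_iff g⁻¹ g).1 h
  rwa [inv_mul_cancel, hθ.unit_one, mul_one] at this

private lemma Gamma_zero (hσ : IsKValuedTwist κ e σ) {Γ : G → R}
    (hΓ : IsPartialProjRepWithFactorSet κ Γ σ) {g : G} (h : e g = 0) : Γ g = 0 := by
  have hz : σ g g⁻¹ = 0 := (hσ.zero_iff g g⁻¹).2 (by rw [mul_inv_cancel, h, zero_mul])
  have h2 := (hΓ.cond1 g g⁻¹ hz).2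
  rw [mul_inv_cancel, hΓ.cond4, inv_inv, one_mul] at h2
  exact h2

private lemma th_inv_th (hθ : IsUnitalPartialAction κ e θ) {g : G} {a : A}
    (ha : e g⁻¹ * a = a) : θ g⁻¹ (θ g a) = a := by
  have h := hθ.inv g a
  rwa [ha] at h

private lemma th_th_inv (hθ : IsUnitalPartialAction κ e θ) {g : G} {a : A}
    (ha : e g * a = a) : θ g (θ g⁻¹ a) = a := by
  have h := th_inv_th (g := g⁻¹) hθ (by rwa [inv_inv])
  rwa [inv_inv] at h


variable {Γ : G → R} {π : A →ₐ[κ] R}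

private lemma cov' (hcov : ∀ (g : G) (a : A), e g⁻¹ * a = a → Γ g * π a * Γ g⁻¹ = σ g g⁻¹ • π (θ g a))
    {g : G} {w : A} (hw : e g * w = w) :
    Γ g⁻¹ * π w * Γ g = σ g⁻¹ g • π (θ g⁻¹ w) := by
  have h := hcov g⁻¹ w (by rwa [inv_inv])
  rwa [inv_inv] at h

private lemma cov₂ (hθ : IsUnitalPartialAction κ e θ)
    (hcov : ∀ (g : G) (a : A), e g⁻¹ * a = a → Γ g * π a * Γ g⁻¹ = σ g g⁻¹ • π (θ g a))
    {g : G} {w : A} (hw : e g * w = w) :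
    Γ g * π (θ g⁻¹ w) * Γ g⁻¹ = σ g g⁻¹ • π w := by
  have hr : e g⁻¹ * θ g⁻¹ w = θ g⁻¹ w := hθ.range g⁻¹ w
  have h1 := hcov g (θ g⁻¹ w) hr
  rwa [th_th_inv hθ hw] at h1

private lemma auxL1 (hθ : IsUnitalPartialAction κ e θ) (hσ : IsKValuedTwist κ e σ)
    (hΓ : IsPartialProjRepWithFactorSet κ Γ σ)
    (hcov : ∀ (g : G) (a : A), e g⁻¹ * a = a → Γ g * π a * Γ g⁻¹ = σ g g⁻¹ • π (θ g a))
    {g : G} {w : A} (hw : e g * w = w) :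
    π w * (Γ g * Γ g⁻¹) = σ g g⁻¹ • π w := by
  by_cases hg : e g = 0
  · have hw0 : w = 0 := by rw [← hw, hg, zero_mul]
    simp [hw0]
  · have hne := sigma_gg_ne hθ hσ hg
    have c2 : Γ g⁻¹ * Γ g * Γ g⁻¹ = σ g g⁻¹ • Γ g⁻¹ := by
      have h := hΓ.cond2 g g⁻¹
      rwa [mul_inv_cancel, hΓ.cond4, mul_one] at h
    apply kcancel hne
    calc σ g g⁻¹ • (π w * (Γ g * Γ g⁻¹))
        = (σ g g⁻¹ • π w) * (Γ g * Γ g⁻¹) := (smul_mul_assoc _ _ _).symm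
      _ = (Γ g * π (θ g⁻¹ w) * Γ g⁻¹) * (Γ g * Γ g⁻¹) := by rw [cov₂ hθ hcov hw]
      _ = Γ g * π (θ g⁻¹ w) * (Γ g⁻¹ * Γ g * Γ g⁻¹) := by
          rw [mul_assoc (Γ g * π (θ g⁻¹ w)), mul_assoc (Γ g⁻¹), ← mul_assoc (Γ g⁻¹)]
      _ = Γ g * π (θ g⁻¹ w) * (σ g g⁻¹ • Γ g⁻¹) := by rw [c2]
      _ = σ g g⁻¹ • (Γ g * π (θ g⁻¹ w) * Γ g⁻¹) := (mul_smul_comm _ _ _)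
      _ = σ g g⁻¹ • (σ g g⁻¹ • π w) := by rw [cov₂ hθ hcov hw]

private lemma auxL2 (hθ : IsUnitalPartialAction κ e θ) (hσ : IsKValuedTwist κ e σ)
    (hΓ : IsPartialProjRepWithFactorSet κ Γ σ)
    (hcov : ∀ (g : G) (a : A), e g⁻¹ * a = a → Γ g * π a * Γ g⁻¹ = σ g g⁻¹ • π (θ g a))
    {g : G} {w : A} (hw : e g * w = w) :
    (Γ g * Γ g⁻¹) * π w = σ g⁻¹ g • π w := by
  by_cases hg : e g = 0
  · have hw0 : w = 0 := by rw [← hw, hg, zero_mul]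
    simp [hw0]
  · have hne := sigma_gg_ne hθ hσ hg
    have c2 : Γ g * Γ g⁻¹ * Γ g = σ g⁻¹ g • Γ g := by
      have h := hΓ.cond2 g⁻¹ g
      rwa [inv_inv, inv_mul_cancel, hΓ.cond4, mul_one] at h
    apply kcancel hne
    calc σ g g⁻¹ • ((Γ g * Γ g⁻¹) * π w)
        = (Γ g * Γ g⁻¹) * (σ g g⁻¹ • π w) := (mul_smul_comm _ _ _).symm
      _ = (Γ g * Γ g⁻¹) * (Γ g * π (θ g⁻¹ w) * Γ g⁻¹) := by rw [cov₂ hθ hcov hw]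
      _ = (Γ g * Γ g⁻¹ * Γ g) * (π (θ g⁻¹ w) * Γ g⁻¹) := by noncomm_ring
      _ = (σ g⁻¹ g • Γ g) * (π (θ g⁻¹ w) * Γ g⁻¹) := by rw [c2]
      _ = σ g⁻¹ g • (Γ g * π (θ g⁻¹ w) * Γ g⁻¹) := by
          rw [smul_mul_assoc, mul_assoc]
      _ = σ g⁻¹ g • (σ g g⁻¹ • π w) := by rw [cov₂ hθ hcov hw]
      _ = σ g g⁻¹ • (σ g⁻¹ g • π w) := by rw [smul_smul, smul_smul, mul_comm]

private lemma auxL3 (hθ : IsUnitalPartialAction κ e θ) (hσ : IsKValuedTwist κ e σ)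
    (hΓ : IsPartialProjRepWithFactorSet κ Γ σ)
    (hcov : ∀ (g : G) (a : A), e g⁻¹ * a = a → Γ g * π a * Γ g⁻¹ = σ g g⁻¹ • π (θ g a))
    {g : G} {c : A} (hc : e g⁻¹ * c = c) :
    Γ g * π c = π (θ g c) * Γ g := by
  by_cases hg : e g = 0
  · have hc0 : c = 0 := by rw [← hc, e_inv_of_e hθ g hg, zero_mul]
    simp [hc0, Gamma_zero hσ hΓ hg, theta_zero hθ]
  · have hne := sigma_inv_ne hθ hσ hg
    have hcw : e g * θ g c = θ g c := hθ.range g c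
    have h1 : Γ g⁻¹ * π (θ g c) * Γ g = σ g⁻¹ g • π c := by
      have h := cov' hcov hcw
      rwa [th_inv_th hθ hc] at h
    apply kcancel hne
    calc σ g⁻¹ g • (Γ g * π c)
        = Γ g * (σ g⁻¹ g • π c) := (mul_smul_comm _ _ _).symm
      _ = Γ g * (Γ g⁻¹ * π (θ g c) * Γ g) := by rw [h1]
      _ = ((Γ g * Γ g⁻¹) * π (θ g c)) * Γ g := by noncomm_ring
      _ = (σ g⁻¹ g • π (θ g c)) * Γ g := by rw [auxL2 hθ hσ hΓ hcov hcw]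
      _ = σ g⁻¹ g • (π (θ g c) * Γ g) := smul_mul_assoc _ _ _

private lemma auxL4 (hθ : IsUnitalPartialAction κ e θ) (hσ : IsKValuedTwist κ e σ)
    (hΓ : IsPartialProjRepWithFactorSet κ Γ σ)
    (hcov : ∀ (g : G) (a : A), e g⁻¹ * a = a → Γ g * π a * Γ g⁻¹ = σ g g⁻¹ • π (θ g a))
    {g : G} {a : A} (ha : e g * a = a) :
    π a * Γ g = Γ g * π (θ g⁻¹ a) := by
  have hc : e g⁻¹ * θ g⁻¹ a = θ g⁻¹ a := hθ.range g⁻¹ a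
  have h := auxL3 hθ hσ hΓ hcov hc
  rw [th_th_inv hθ ha] at h
  exact h.symm

private lemma auxP (hθ : IsUnitalPartialAction κ e θ) (hσ : IsKValuedTwist κ e σ)
    (hΓ : IsPartialProjRepWithFactorSet κ Γ σ)
    (hcov : ∀ (g : G) (a : A), e g⁻¹ * a = a → Γ g * π a * Γ g⁻¹ = σ g g⁻¹ • π (θ g a))
    {g : G} {a : A} (ha : e g * a = a) (b : A) :
    π a * Γ g * π b = π (a * θ g (e g⁻¹ * b)) * Γ g := by
  have hc : e g⁻¹ * (θ g⁻¹ a * b) = θ g⁻¹ a * b := by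
    rw [← mul_assoc, hθ.range g⁻¹ a]
  have hth : θ g (θ g⁻¹ a * b) = a * θ g (e g⁻¹ * b) := by
    calc θ g (θ g⁻¹ a * b) = θ g (e g⁻¹ * (θ g⁻¹ a * b)) := hθ.dom g _
      _ = θ g (e g⁻¹ * θ g⁻¹ a) * θ g (e g⁻¹ * b) := hθ.mul g _ b
      _ = θ g (θ g⁻¹ a) * θ g (e g⁻¹ * b) := by rw [hθ.range g⁻¹ a]
      _ = a * θ g (e g⁻¹ * b) := by rw [th_th_inv hθ ha]
  calc π a * Γ g * π b = Γ g * π (θ g⁻¹ a) * π b := by rw [auxL4 hθ hσ hΓ hcov ha]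
    _ = Γ g * π (θ g⁻¹ a * b) := by rw [mul_assoc, ← map_mul]
    _ = π (θ g (θ g⁻¹ a * b)) * Γ g := auxL3 hθ hσ hΓ hcov hc
    _ = π (a * θ g (e g⁻¹ * b)) * Γ g := by rw [hth]

private lemma auxL5 (hθ : IsUnitalPartialAction κ e θ) (hσ : IsKValuedTwist κ e σ)
    (hΓ : IsPartialProjRepWithFactorSet κ Γ σ)
    (hcov : ∀ (g : G) (a : A), e g⁻¹ * a = a → Γ g * π a * Γ g⁻¹ = σ g g⁻¹ • π (θ g a))
    {g : G} (h : G) {w : A} (hw : e g * w = w) :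
    π w * Γ g * Γ h = σ g h • (π w * Γ (g * h)) := by
  by_cases hg : e g = 0
  · have hw0 : w = 0 := by rw [← hw, hg, zero_mul]
    simp [hw0]
  · have hne := sigma_gg_ne hθ hσ hg
    have c3 : Γ g * Γ g⁻¹ * Γ g = σ g g⁻¹ • Γ g := by
      have hh := hΓ.cond3 g g⁻¹
      rwa [mul_inv_cancel, hΓ.cond4, one_mul, inv_inv] at hh
    apply kcancel hne
    calc σ g g⁻¹ • (π w * Γ g * Γ h)
        = π w * (σ g g⁻¹ • Γ g) * Γ h := by
          simp [smul_mul_assoc, mul_smul_comm]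
      _ = π w * (Γ g * Γ g⁻¹ * Γ g) * Γ h := by rw [c3]
      _ = (π w * Γ g) * (Γ g⁻¹ * Γ g * Γ h) := by noncomm_ring
      _ = (π w * Γ g) * (σ g h • (Γ g⁻¹ * Γ (g * h))) := by rw [hΓ.cond2]
      _ = σ g h • ((π w * (Γ g * Γ g⁻¹)) * Γ (g * h)) := by
          rw [mul_smul_comm]; congr 1; noncomm_ring
      _ = σ g h • ((σ g g⁻¹ • π w) * Γ (g * h)) := by rw [auxL1 hθ hσ hΓ hcov hw]
      _ = σ g g⁻¹ • (σ g h • (π w * Γ (g * h))) := by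
          rw [smul_mul_assoc, smul_comm]

private lemma repmul (hθ : IsUnitalPartialAction κ e θ) (hσ : IsKValuedTwist κ e σ)
    (hΓ : IsPartialProjRepWithFactorSet κ Γ σ)
    (hcov : ∀ (g : G) (a : A), e g⁻¹ * a = a → Γ g * π a * Γ g⁻¹ = σ g g⁻¹ • π (θ g a))
    {g h : G} {a : A} (b : A) (ha : e g * a = a) :
    (π a * Γ g) * (π b * Γ h) = σ g h • (π (a * θ g (e g⁻¹ * b)) * Γ (g * h)) := by
  have hw : e g * (a * θ g (e g⁻¹ * b)) = a * θ g (e g⁻¹ * b) := by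
    rw [← mul_assoc, ha]
  calc (π a * Γ g) * (π b * Γ h) = (π a * Γ g * π b) * Γ h := by rw [← mul_assoc]
    _ = π (a * θ g (e g⁻¹ * b)) * Γ g * Γ h := by rw [auxP hθ hσ hΓ hcov ha b]
    _ = σ g h • (π (a * θ g (e g⁻¹ * b)) * Γ (g * h)) := auxL5 hθ hσ hΓ hcov h hw


private lemma e_gh_c (hθ : IsUnitalPartialAction κ e θ) {g h : G} {a b : A}
    (ha : e g * a = a) (hb : e h * b = b) :
    e (g * h) * (a * θ g (e g⁻¹ * b)) = a * θ g (e g⁻¹ * b) := by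
  have key : e (g * h) * θ g (e g⁻¹ * b) = θ g (e g⁻¹ * b) := by
    conv_lhs => rw [← hb]
    conv_rhs => rw [← hb]
    rw [hθ.mul, hθ.unit_map, ← mul_assoc, ← mul_assoc,
      hθ.central (g * h) (e g), mul_assoc (e g), hθ.idem]
  rw [← mul_assoc, hθ.central (g * h) a, mul_assoc, key]

section CP

variable [DecidableEq G] {Λ : Type} [Ring Λ] [Algebra κ Λ] {δ : G → A → Λ}

private lemma sum_ite_ext {M : Type} [AddCommMonoid M] (f : G → A → M)
    (hf : ∀ g, f g 0 = 0) {s u : Finset G} (hsu : s ⊆ u) (a : G → A) :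
    ∑ g ∈ u, f g (if g ∈ s then a g else 0) = ∑ g ∈ s, f g (a g) := by
  have h1 : ∀ g ∈ u, f g (if g ∈ s then a g else 0)
      = if g ∈ s then f g (a g) else 0 := by
    intro g _
    split <;> simp [hf]
  rw [Finset.sum_congr rfl h1, Finset.sum_ite_mem, Finset.inter_eq_right.2 hsu]

private lemma well_def (hΛ : IsCrossedProduct κ e θ σ Λ δ) {Γ : G → R} {π : A →ₐ[κ] R}
    (s t : Finset G) (a b : G → A)
    (hna : ∀ g, e g * a g = a g) (hnb : ∀ g, e g * b g = b g)
    (hst : (∑ g ∈ s, δ g (a g)) = ∑ g ∈ t, δ g (b g)) :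
    (∑ g ∈ s, π (a g) * Γ g) = ∑ g ∈ t, π (b g) * Γ g := by
  set c : G → A := fun g =>
    (if g ∈ s then a g else 0) - (if g ∈ t then b g else 0) with hc
  have hnc : ∀ g, e g * c g = c g := by
    intro g
    simp only [hc, mul_sub]
    congr 1 <;> split <;> simp [hna, hnb]
  have hsum : (∑ g ∈ s ∪ t, δ g (c g)) = 0 := by
    have h1 : ∀ g ∈ s ∪ t, δ g (c g)
        = δ g (if g ∈ s then a g else 0) - δ g (if g ∈ t then b g else 0) := by
      intro g _
      exact (hΛ.lin g).map_sub _ _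
    rw [Finset.sum_congr rfl h1, Finset.sum_sub_distrib,
      sum_ite_ext (fun g x => δ g x) (fun g => (hΛ.lin g).map_zero) Finset.subset_union_left,
      sum_ite_ext (fun g x => δ g x) (fun g => (hΛ.lin g).map_zero) Finset.subset_union_right,
      hst, sub_self]
  have hz := hΛ.indep (s ∪ t) c hnc hsum
  have heq : ∀ g ∈ s ∪ t,
      (if g ∈ s then a g else 0) = (if g ∈ t then b g else 0) := by
    intro g hg
    have := hz g hg
    rw [hc] at this
    exact sub_eq_zero.1 this
  calc (∑ g ∈ s, π (a g) * Γ g)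
      = ∑ g ∈ s ∪ t, π (if g ∈ s then a g else 0) * Γ g :=
        (sum_ite_ext (fun g x => π x * Γ g) (fun g => by simp)
          Finset.subset_union_left a).symm
    _ = ∑ g ∈ s ∪ t, π (if g ∈ t then b g else 0) * Γ g := by
        refine Finset.sum_congr rfl fun g hg => by rw [heq g hg]
    _ = ∑ g ∈ t, π (b g) * Γ g :=
        sum_ite_ext (fun g x => π x * Γ g) (fun g => by simp)
          Finset.subset_union_right b

end CP

end Aux

/-- Let `θ` be a unital partial action of `G` on `A` with `κ`-valued
twist `σ`, and `(π, Γ)` a covariant `σ`-representation of `θ` in a unital `κ`-algebra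
`R`.  Then the map `π × Γ : A ∗_{θ,σ} G → R` determined by `a δ_g ↦ π(a)Γ(g)` is a
homomorphism of `κ`-algebras. -/
theorem covariantRep_induces_algHom
    {κ G A : Type} [Field κ] [Group G] [Ring A] [Algebra κ A]
    (e : G → A) (θ : G → A → A) (σ : G → G → κ)
    (hθ : IsUnitalPartialAction κ e θ) (hσ : IsKValuedTwist κ e σ)
    (Λ : Type) [Ring Λ] [Algebra κ Λ] (δ : G → A → Λ)
    (hΛ : IsCrossedProduct κ e θ σ Λ δ)
    {R : Type} [Ring R] [Algebra κ R]
    (π : A →ₐ[κ] R) (Γ : G → R)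
    (hΓ : IsPartialProjRepWithFactorSet κ Γ σ)
    (hcov : ∀ (g : G) (a : A), e g⁻¹ * a = a → Γ g * π a * Γ g⁻¹ = σ g g⁻¹ • π (θ g a)) :
    ∃ f : Λ →ₐ[κ] R, ∀ (g : G) (a : A), e g * a = a → f (δ g a) = π a * Γ g := by
  classical
  choose sx ax hax hx using hΛ.span
  set f₀ : Λ → R := fun x => ∑ g ∈ sx x, π (ax x g) * Γ g with hf₀
  have key : ∀ (x : Λ) (s : Finset G) (a : G → A), (∀ g, e g * a g = a g) →
      x = ∑ g ∈ s, δ g (a g) → f₀ x = ∑ g ∈ s, π (a g) * Γ g := by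
    intro x s a hna hxs
    exact well_def hΛ (sx x) s (ax x) a (hax x) hna (by rw [← hx x, ← hxs])
  have hdelta : ∀ (g : G) (a : A), e g * a = a → f₀ (δ g a) = π a * Γ g := by
    intro g a ha
    have h := key (δ g a) {g} (fun h => if h = g then a else 0)
      (fun h => by
        split
        · next hh => rw [hh]; exact ha
        · exact mul_zero _) (by simp)
    simpa using h
  have hzero : f₀ 0 = 0 := by
    have h := key 0 ∅ (fun _ => 0) (fun g => by simp) (by simp)
    simpa using h
  have hadd : ∀ x y : Λ, f₀ (x + y) = f₀ x + f₀ y := by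
    intro x y
    set c : G → A := fun g =>
      (if g ∈ sx x then ax x g else 0) + (if g ∈ sx y then ax y g else 0) with hc
    have hnc : ∀ g, e g * c g = c g := by
      intro g
      simp only [hc, mul_add]
      congr 1 <;> split <;> simp [hax]
    have hdecomp : x + y = ∑ g ∈ sx x ∪ sx y, δ g (c g) := by
      have h1 : ∀ g ∈ sx x ∪ sx y, δ g (c g)
          = δ g (if g ∈ sx x then ax x g else 0)
            + δ g (if g ∈ sx y then ax y g else 0) := by
        intro g _
        exact (hΛ.lin g).map_add _ _
      rw [Finset.sum_congr rfl h1, Finset.sum_add_distrib,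
        sum_ite_ext (fun g z => δ g z) (fun g => (hΛ.lin g).map_zero)
          Finset.subset_union_left,
        sum_ite_ext (fun g z => δ g z) (fun g => (hΛ.lin g).map_zero)
          Finset.subset_union_right, ← hx x, ← hx y]
    have h2 : ∀ g ∈ sx x ∪ sx y, π (c g) * Γ g
        = π (if g ∈ sx x then ax x g else 0) * Γ g
          + π (if g ∈ sx y then ax y g else 0) * Γ g := by
      intro g _
      rw [hc]; simp [add_mul]
    rw [key (x + y) _ c hnc hdecomp, Finset.sum_congr rfl h2,
      Finset.sum_add_distrib,
      sum_ite_ext (fun g z => π z * Γ g) (fun g => by simp)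
        Finset.subset_union_left,
      sum_ite_ext (fun g z => π z * Γ g) (fun g => by simp)
        Finset.subset_union_right]
  have hsmul : ∀ (k : κ) (x : Λ), f₀ (k • x) = k • f₀ x := by
    intro k x
    have hdecomp : k • x = ∑ g ∈ sx x, δ g (k • ax x g) := by
      conv_lhs => rw [hx x]
      rw [Finset.smul_sum]
      exact Finset.sum_congr rfl fun g _ => ((hΛ.lin g).map_smul k _).symm
    rw [key (k • x) _ _ (fun g => by rw [mul_smul_comm, hax]) hdecomp, hf₀,
      Finset.smul_sum]
    exact Finset.sum_congr rfl fun g _ => by rw [map_smul, smul_mul_assoc]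
  have hone : f₀ 1 = 1 := by
    have h := key 1 {1} (fun h => if h = 1 then 1 else 0)
      (fun g => by
        split
        · next hh => rw [hh, hθ.unit_one, one_mul]
        · exact mul_zero _) (by simp [hΛ.unit])
    simpa [hΓ.cond4] using h
  have hmul : ∀ x y : Λ, f₀ (x * y) = f₀ x * f₀ y := by
    intro x y
    let F : Λ →+ R := AddMonoidHom.mk' f₀ hadd
    have hFs : ∀ (k : κ) (z : Λ), F (k • z) = k • F z := hsmul
    have hterm : ∀ (g h : G), f₀ (δ g (ax x g) * δ h (ax y h))
        = (π (ax x g) * Γ g) * (π (ax y h) * Γ h) := by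
      intro g h
      have e1 : δ g (ax x g) * δ h (ax y h)
          = σ g h • δ (g * h) (ax x g * θ g (e g⁻¹ * ax y h)) := by
        conv_lhs => rw [← hax x g, ← hax y h]
        rw [hΛ.mul, hax x g, hax y h]
      rw [e1]
      show F _ = _
      rw [hFs]
      show σ g h • f₀ _ = _
      rw [hdelta (g * h) _ (e_gh_c hθ (hax x g) (hax y h)),
        repmul hθ hσ hΓ hcov (ax y h) (hax x g)]
    calc f₀ (x * y) = F (x * y) := rfl
      _ = F (∑ g ∈ sx x, ∑ h ∈ sx y, δ g (ax x g) * δ h (ax y h)) := by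
          rw [← Finset.sum_mul_sum, ← hx x, ← hx y]
      _ = ∑ g ∈ sx x, ∑ h ∈ sx y, F (δ g (ax x g) * δ h (ax y h)) := by
          rw [map_sum]
          exact Finset.sum_congr rfl fun g _ => map_sum F _ _
      _ = ∑ g ∈ sx x, ∑ h ∈ sx y, (π (ax x g) * Γ g) * (π (ax y h) * Γ h) :=
          Finset.sum_congr rfl fun g _ => Finset.sum_congr rfl fun h _ => hterm g h
      _ = f₀ x * f₀ y := (Finset.sum_mul_sum _ _ _ _).symm
  refine ⟨AlgHom.mk' ⟨⟨⟨f₀, hone⟩, hmul⟩, hzero, hadd⟩ hsmul, hdelta⟩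
end

section
/- Let Γ : G → R be a partial projective σ-representation of G in a unital κ-algebra R and X a unital R-bimodule. Then the map Γ' : G → End_κ(X) defined by Γ'_g(x) = Γ(g)·x·Γ(g⁻¹) is a partial projective σ'-representation, where σ'(g,h) = σ(g,h)σ(h⁻¹,g⁻¹). -/
/-!
Write `sandwich a b` for the endomorphism `x ↦ a • x • b` of the bimodule. Since left and right
actions commute, `sandwich a b * sandwich c d = sandwich (a * c) (d * b)`: a product of the
`Γ'_g = sandwich (Γ g) (Γ g⁻¹)` is a product of `Γ`'s on the left and the reversed product of
`Γ`'s at inverted arguments on the right. Each side is then rewritten by one axiom for `Γ`, at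
`(g, h)` on the left and at `(h⁻¹, g⁻¹)` on the right, which is where the factor
`σ(g, h) σ(h⁻¹, g⁻¹)` comes from.
-/

open MulOpposite

section Sandwich

variable (κ : Type*) {R X : Type*} [CommSemiring κ] [Semiring R] [Algebra κ R]
  [AddCommMonoid X] [Module κ X] [Module R X] [Module Rᵐᵒᵖ X]
  [IsScalarTower κ R X] [IsScalarTower κ Rᵐᵒᵖ X]

def sandwich (a b : R) : Module.End κ X :=
  Module.toModuleEnd κ X a * Module.toModuleEnd κ X (op b)

variable {κ}

@[simp]
theorem sandwich_apply (a b : R) (x : X) : sandwich κ a b x = a • op b • x := rfl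

theorem sandwich_mul [SMulCommClass R Rᵐᵒᵖ X] (a b c d : R) :
    sandwich κ a b * sandwich κ c d = (sandwich κ (a * c) (d * b) : Module.End κ X) := by
  ext x
  simp only [Module.End.mul_apply, sandwich_apply, op_mul, mul_smul, smul_comm c (op b)]

theorem sandwich_smul_left (s : κ) (a b : R) :
    sandwich κ (s • a) b = (s • sandwich κ a b : Module.End κ X) := by
  ext x
  simp only [sandwich_apply, LinearMap.smul_apply, smul_assoc]

theorem sandwich_smul_right (t : κ) (a b : R) :
    sandwich κ a (t • b) = (t • sandwich κ a b : Module.End κ X) := by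
  ext x
  simp only [sandwich_apply, LinearMap.smul_apply, op_smul, smul_assoc, smul_comm a t]

@[simp]
theorem sandwich_zero_left (b : R) : sandwich κ 0 b = (0 : Module.End κ X) := by
  ext x; simp

@[simp]
theorem sandwich_zero_right (a : R) : sandwich κ a 0 = (0 : Module.End κ X) := by
  ext x; simp

@[simp]
theorem sandwich_one_one : sandwich κ (1 : R) 1 = (1 : Module.End κ X) := by
  ext x; simp

end Sandwich

structure IsPartialProjectiveRep {κ G A : Type*} [CommSemiring κ] [Group G] [Semiring A]
    [Algebra κ A] (σ : G → G → κ) (Γ : G → A) : Prop where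
  eq_zero_of_eq_zero : ∀ g h, σ g h = 0 → Γ g⁻¹ * Γ (g * h) = 0 ∧ Γ (g * h) * Γ h⁻¹ = 0
  inv_mul_mul : ∀ g h, Γ g⁻¹ * Γ g * Γ h = σ g h • (Γ g⁻¹ * Γ (g * h))
  mul_mul_inv : ∀ g h, Γ g * Γ h * Γ h⁻¹ = σ g h • (Γ (g * h) * Γ h⁻¹)
  map_one : Γ 1 = 1

namespace IsPartialProjectiveRep

variable {κ G R X : Type*} [CommSemiring κ] [NoZeroDivisors κ] [Group G] [Semiring R]
  [Algebra κ R] [AddCommMonoid X] [Module κ X] [Module R X] [Module Rᵐᵒᵖ X]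
  [SMulCommClass R Rᵐᵒᵖ X] [IsScalarTower κ R X] [IsScalarTower κ Rᵐᵒᵖ X]
  {σ : G → G → κ} {Γ : G → R}

theorem sandwich_inv (hΓ : IsPartialProjectiveRep σ Γ) :
    IsPartialProjectiveRep (fun g h ↦ σ g h * σ h⁻¹ g⁻¹)
      (fun g ↦ (sandwich κ (Γ g) (Γ g⁻¹) : Module.End κ X)) where
  eq_zero_of_eq_zero g h hσ := by
    simp only [inv_inv, sandwich_mul, mul_inv_rev]
    rcases mul_eq_zero.mp hσ with hσ | hσ
    · obtain ⟨hl, hr⟩ := hΓ.eq_zero_of_eq_zero g h hσ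
      simp only [hl, hr, sandwich_zero_left, and_self]
    · obtain ⟨hl, hr⟩ := hΓ.eq_zero_of_eq_zero h⁻¹ g⁻¹ hσ
      rw [inv_inv] at hl hr
      simp only [hl, hr, sandwich_zero_right, and_self]
  inv_mul_mul g h := by
    have hr := hΓ.mul_mul_inv h⁻¹ g⁻¹
    rw [inv_inv] at hr
    simp only [inv_inv, sandwich_mul, mul_inv_rev, ← mul_assoc, hΓ.inv_mul_mul g h, hr,
      sandwich_smul_left, sandwich_smul_right, smul_smul, mul_comm (σ h⁻¹ g⁻¹)]
  mul_mul_inv g h := by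
    have hr := hΓ.inv_mul_mul h⁻¹ g⁻¹
    rw [inv_inv] at hr
    simp only [inv_inv, sandwich_mul, mul_inv_rev, ← mul_assoc, hΓ.mul_mul_inv g h, hr,
      sandwich_smul_left, sandwich_smul_right, smul_smul, mul_comm (σ h⁻¹ g⁻¹)]
  map_one := by simp only [hΓ.map_one, inv_one, sandwich_one_one]

end IsPartialProjectiveRep

/-- Let `Γ : G → R` be a partial projective `σ`-representation of `G`
in a unital `κ`-algebra `R` and `X` a unital `R`-bimodule.  Then the map
`Γ' : G → End_κ(X)`, `Γ'_g(x) = Γ(g)·x·Γ(g⁻¹)`, is a partial projective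
`σ'`-representation, where `σ'(g,h) = σ(g,h)σ(h⁻¹,g⁻¹)`. -/
theorem bimodule_partial_projective_rep
    {κ G R X : Type*} [Field κ] [Group G] [Ring R] [Algebra κ R]
    [AddCommGroup X] [Module κ X]
    [Module R X] [Module Rᵐᵒᵖ X] [SMulCommClass R Rᵐᵒᵖ X]
    [IsScalarTower κ R X] [IsScalarTower κ Rᵐᵒᵖ X]
    (Γ : G → R) (σ : G → G → κ)
    (h1 : ∀ g h : G, σ g h = 0 → Γ g⁻¹ * Γ (g * h) = 0 ∧ Γ (g * h) * Γ h⁻¹ = 0)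
    (h2 : ∀ g h : G, Γ g⁻¹ * Γ g * Γ h = σ g h • (Γ g⁻¹ * Γ (g * h)))
    (h3 : ∀ g h : G, Γ g * Γ h * Γ h⁻¹ = σ g h • (Γ (g * h) * Γ h⁻¹))
    (h4 : Γ 1 = 1)
    (σ' : G → G → κ) (hσ' : ∀ g h : G, σ' g h = σ g h * σ h⁻¹ g⁻¹) :
    ∃ Γ' : G → Module.End κ X,
      (∀ (g : G) (x : X), Γ' g x = Γ g • (MulOpposite.op (Γ g⁻¹) • x)) ∧
      (∀ g h : G, σ' g h = 0 →
        Γ' g⁻¹ * Γ' (g * h) = 0 ∧ Γ' (g * h) * Γ' h⁻¹ = 0) ∧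
      (∀ g h : G, Γ' g⁻¹ * Γ' g * Γ' h = σ' g h • (Γ' g⁻¹ * Γ' (g * h))) ∧
      (∀ g h : G, Γ' g * Γ' h * Γ' h⁻¹ = σ' g h • (Γ' (g * h) * Γ' h⁻¹)) ∧
      (Γ' 1 = 1) := by
  obtain rfl : σ' = fun g h ↦ σ g h * σ h⁻¹ g⁻¹ := funext₂ hσ'
  obtain ⟨h1', h2', h3', h4'⟩ := (IsPartialProjectiveRep.mk h1 h2 h3 h4).sandwich_inv (X := X)
  exact ⟨_, fun g ↦ sandwich_apply _ _, h1', h2', h3', h4'⟩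
end

section
/- Every commutative κ-algebra generated (as an algebra) by a set of idempotents is von Neumann regular. -/
/-!
Over a field every scalar `r` is regular, with quasi-inverse `r⁻¹`. Adjoining one idempotent `e`
to a subalgebra `B` gives `B + e B`, and `x = a + e b` is regular as soon as its two Peirce
components `e x = e (a + b)` and `(1 - e) x = (1 - e) a` are; these are idempotent multiples of
elements of `B`. Induction on finitely many idempotents handles every element of the algebra,
since each one lies in the subalgebra generated by finitely many of the generators.
-/

def IsVonNeumannRegularElem {M : Type*} [Mul M] (x : M) : Prop :=
  ∃ y, x * y * x = x

namespace IsVonNeumannRegularElem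

theorem of_groupWithZero {G₀ : Type*} [GroupWithZero G₀] (a : G₀) : IsVonNeumannRegularElem a :=
  ⟨a⁻¹, mul_inv_mul_cancel a⟩

theorem map {M N F : Type*} [Mul M] [Mul N] [FunLike F M N] [MulHomClass F M N] (f : F)
    {x : M} (hx : IsVonNeumannRegularElem x) : IsVonNeumannRegularElem (f x) := by
  obtain ⟨y, hy⟩ := hx
  exact ⟨f y, by rw [← map_mul, ← map_mul, hy]⟩

theorem idempotent_mul {M : Type*} [CommSemigroup M] {e x : M} (he : IsIdempotentElem e)
    (hx : IsVonNeumannRegularElem x) : IsVonNeumannRegularElem (e * x) := by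
  obtain ⟨y, hy⟩ := hx
  refine ⟨y, ?_⟩
  calc e * x * y * (e * x) = (e * e) * (x * y * x) := by ac_rfl
    _ = e * x := by rw [he.eq, hy]

theorem of_idempotent_mul_of_one_sub_mul {A : Type*} [CommRing A] {e x : A}
    (he : IsIdempotentElem e) (h₁ : IsVonNeumannRegularElem (e * x))
    (h₂ : IsVonNeumannRegularElem ((1 - e) * x)) : IsVonNeumannRegularElem x := by
  obtain ⟨y₁, hy₁⟩ := h₁
  obtain ⟨y₂, hy₂⟩ := h₂
  refine ⟨e * y₁ + (1 - e) * y₂, ?_⟩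
  calc x * (e * y₁ + (1 - e) * y₂) * x
      = e * x * y₁ * (e * x) + (1 - e) * x * y₂ * ((1 - e) * x) := by
        linear_combination -(x * y₁ * x + x * y₂ * x) * he.eq
    _ = x := by rw [hy₁, hy₂]; ring

end IsVonNeumannRegularElem

theorem Algebra.exists_finset_subset_of_mem_adjoin {R A : Type*} [CommSemiring R] [Semiring A]
    [Algebra R A] {s : Set A} {x : A} (hx : x ∈ Algebra.adjoin R s) :
    ∃ t : Finset A, ↑t ⊆ s ∧ x ∈ Algebra.adjoin R (t : Set A) := by
  classical
  induction hx using Algebra.adjoin_induction with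
  | mem a ha => exact ⟨{a}, by simpa using ha, Algebra.subset_adjoin (by simp)⟩
  | algebraMap r => exact ⟨∅, by simp, Subalgebra.algebraMap_mem _ r⟩
  | add a b _ _ iha ihb =>
    obtain ⟨ta, hta, ha⟩ := iha
    obtain ⟨tb, htb, hb⟩ := ihb
    refine ⟨ta ∪ tb, by simp [hta, htb], add_mem ?_ ?_⟩
    · exact Algebra.adjoin_mono (by simp) ha
    · exact Algebra.adjoin_mono (by simp) hb
  | mul a b _ _ iha ihb =>
    obtain ⟨ta, hta, ha⟩ := iha
    obtain ⟨tb, htb, hb⟩ := ihb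
    refine ⟨ta ∪ tb, by simp [hta, htb], mul_mem ?_ ?_⟩
    · exact Algebra.adjoin_mono (by simp) ha
    · exact Algebra.adjoin_mono (by simp) hb

theorem Algebra.exists_eq_add_mul_of_mem_adjoin_insert {R A : Type*} [CommSemiring R]
    [CommSemiring A] [Algebra R A] {s : Set A} {e x : A} (he : IsIdempotentElem e)
    (hx : x ∈ Algebra.adjoin R (insert e s)) :
    ∃ a ∈ Algebra.adjoin R s, ∃ b ∈ Algebra.adjoin R s, x = a + e * b := by
  induction hx using Algebra.adjoin_induction with
  | mem a ha =>
    rcases ha with rfl | ha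
    · exact ⟨0, zero_mem _, 1, one_mem _, by simp⟩
    · exact ⟨a, Algebra.subset_adjoin ha, 0, zero_mem _, by simp⟩
  | algebraMap r => exact ⟨algebraMap R A r, Subalgebra.algebraMap_mem _ r, 0, zero_mem _, by simp⟩
  | add x x' _ _ ih ih' =>
    obtain ⟨a, ha, b, hb, rfl⟩ := ih
    obtain ⟨a', ha', b', hb', rfl⟩ := ih'
    exact ⟨a + a', add_mem ha ha', b + b', add_mem hb hb', by ring⟩
  | mul x x' _ _ ih ih' =>
    obtain ⟨a, ha, b, hb, rfl⟩ := ih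
    obtain ⟨a', ha', b', hb', rfl⟩ := ih'
    refine ⟨a * a', mul_mem ha ha', a * b' + b * a' + b * b',
      add_mem (add_mem (mul_mem ha hb') (mul_mem hb ha')) (mul_mem hb hb'), ?_⟩
    calc (a + e * b) * (a' + e * b') = a * a' + e * (a * b' + b * a') + (e * e) * (b * b') := by
          ring
      _ = a * a' + e * (a * b' + b * a' + b * b') := by rw [he.eq]; ring

theorem isVonNeumannRegularElem_of_mem_adjoin_finset {R A : Type*} [CommRing R] [CommRing A]
    [Algebra R A] (hR : ∀ r : R, IsVonNeumannRegularElem r) (t : Finset A)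
    (ht : ∀ e ∈ t, IsIdempotentElem e) {x : A} (hx : x ∈ Algebra.adjoin R (t : Set A)) :
    IsVonNeumannRegularElem x := by
  classical
  induction t using Finset.induction_on generalizing x with
  | empty =>
    obtain ⟨r, rfl⟩ := Algebra.mem_bot.mp (by simpa using hx)
    exact (hR r).map (algebraMap R A)
  | insert e t _ ih =>
    have he : IsIdempotentElem e := ht e (Finset.mem_insert_self e t)
    have hreg : ∀ {y}, y ∈ Algebra.adjoin R (t : Set A) → IsVonNeumannRegularElem y :=
      ih fun e' he' ↦ ht e' (Finset.mem_insert_of_mem he')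
    rw [Finset.coe_insert] at hx
    obtain ⟨a, ha, b, hb, rfl⟩ := Algebra.exists_eq_add_mul_of_mem_adjoin_insert he hx
    refine .of_idempotent_mul_of_one_sub_mul he ?_ ?_
    · rw [show e * (a + e * b) = e * (a + b) by linear_combination b * he.eq]
      exact (hreg (add_mem ha hb)).idempotent_mul he
    · rw [show (1 - e) * (a + e * b) = (1 - e) * a by linear_combination -b * he.eq]
      exact (hreg ha).idempotent_mul he.one_sub

/-- Every commutative algebra over a field `κ` generated (as an algebra)
by a set of idempotents is von Neumann regular. -/
theorem vonNeumannRegular_of_idempotent_generators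
    {κ A : Type*} [Field κ] [CommRing A] [Algebra κ A]
    (S : Set A) (hidem : ∀ x ∈ S, IsIdempotentElem x)
    (hgen : Algebra.adjoin κ S = ⊤) :
    ∀ x : A, ∃ y : A, x * y * x = x := by
  intro x
  obtain ⟨t, htS, hxt⟩ := Algebra.exists_finset_subset_of_mem_adjoin (hgen ▸ Algebra.mem_top)
  exact isVonNeumannRegularElem_of_mem_adjoin_finset .of_groupWithZero t
    (fun e he ↦ hidem e (htS he)) hxt
end

section
/- Let A be a commutative algebra over a field κ generated by finitely many idempotents. Then A has a κ-basis consisting of pairwise orthogonal idempotents summing to 1. -/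
/-- A commutative algebra over a field `κ` generated by finitely many
idempotents has a `κ`-basis of pairwise orthogonal idempotents summing to `1`. -/
theorem exists_orthogonal_idempotent_basis
    {κ A : Type*} [Field κ] [CommRing A] [Algebra κ A]
    (S : Set A) (hS : S.Finite) (hidem : ∀ x ∈ S, IsIdempotentElem x)
    (hgen : Algebra.adjoin κ S = ⊤) :
    ∃ (n : ℕ) (b : Module.Basis (Fin n) κ A),
      (∀ i, IsIdempotentElem (b i)) ∧
      (∀ i j, i ≠ j → b i * b j = 0) ∧
      (∑ i, b i = 1) := by
  classical
  set s : Finset A := hS.toFinset with hs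
  have hSs : S = ↑s := by simp [hs]
  haveI : Fintype {x // x ∈ s} := FinsetCoe.fintype s
  set ι := {x // x ∈ s} with hι
  let e : ι → A := fun i => i.1
  have he : ∀ i, IsIdempotentElem (e i) := fun i => hidem i.1 (by
    have := i.2; rwa [hSs])
  let F : (ι → Bool) → A := fun σ => ∏ i, if σ i then e i else 1 - e i
  -- each F σ is idempotent
  have hFidem : ∀ σ, IsIdempotentElem (F σ) := by
    intro σ
    show F σ * F σ = F σ
    rw [show F σ * F σ = ∏ i, ((if σ i then e i else 1 - e i) *
        (if σ i then e i else 1 - e i)) from (Finset.prod_mul_distrib).symm]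
    refine Finset.prod_congr rfl fun i _ => ?_
    by_cases h : σ i
    · simp only [h, if_true]; exact (he i).eq
    · simp only [h, if_false]; exact ((he i).one_sub).eq
  -- orthogonality
  have hForth : ∀ σ τ, σ ≠ τ → F σ * F τ = 0 := by
    intro σ τ hστ
    obtain ⟨i, hi⟩ := Function.ne_iff.mp hστ
    rw [show F σ * F τ = ∏ i, ((if σ i then e i else 1 - e i) *
        (if τ i then e i else 1 - e i)) from (Finset.prod_mul_distrib).symm]
    refine Finset.prod_eq_zero (Finset.mem_univ i) ?_
    have h1 : e i * (1 - e i) = 0 := by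
      rw [mul_sub, mul_one, (he i).eq, sub_self]
    have h2 : (1 - e i) * e i = 0 := by rw [mul_comm]; exact h1
    cases hσ : σ i <;> cases hτ : τ i <;> simp [hσ, hτ] at hi ⊢ <;>
      first | exact h1 | exact h2
  -- sum to one
  have hFsum : ∑ σ : ι → Bool, F σ = 1 := by
    have key : ∏ i : ι, (∑ b : Bool, if b then e i else 1 - e i)
        = ∑ σ ∈ Fintype.piFinset (fun _ : ι => (Finset.univ : Finset Bool)),
            ∏ i, if σ i then e i else 1 - e i := by
      exact Finset.prod_univ_sum _ _
    rw [Fintype.piFinset_univ] at key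
    have : ∏ i : ι, (∑ b : Bool, if b then e i else 1 - e i) = 1 := by
      refine Finset.prod_eq_one fun i _ => ?_
      simp
    rw [this] at key
    exact key.symm
  -- e i * F σ
  have heF : ∀ (i : ι) (σ : ι → Bool), e i * F σ = if σ i then F σ else 0 := by
    intro i σ
    have hd : F σ = (if σ i then e i else 1 - e i) *
        ∏ j ∈ Finset.univ.erase i, (if σ j then e j else 1 - e j) :=
      (Finset.mul_prod_erase _ _ (Finset.mem_univ i)).symm
    have h1 : e i * (1 - e i) = 0 := by
      rw [mul_sub, mul_one, (he i).eq, sub_self]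
    by_cases h : σ i
    · rw [if_pos h] at hd
      rw [if_pos h, hd, ← mul_assoc, (he i).eq]
    · rw [if_neg h] at hd
      rw [if_neg h, hd, ← mul_assoc, h1, zero_mul]
  -- span of range F is everything
  set P : Submodule κ A := Submodule.span κ (Set.range F) with hP
  have h1P : (1 : A) ∈ P := by
    rw [← hFsum]
    exact Submodule.sum_mem _ fun σ _ => Submodule.subset_span ⟨σ, rfl⟩
  have hmulP : ∀ (x y : A), x ∈ P → y ∈ P → x * y ∈ P := by
    intro x y hx hy
    have h := Submodule.mul_mem_mul hx hy
    rw [hP, Submodule.span_mul_span] at h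
    refine Submodule.span_le.mpr ?_ h
    rintro z hz
    rw [Set.mem_mul] at hz
    obtain ⟨a, ha, c, hc, rfl⟩ := hz
    obtain ⟨σ, rfl⟩ := ha
    obtain ⟨τ, rfl⟩ := hc
    by_cases hστ : σ = τ
    · subst hστ
      rw [(hFidem σ).eq]
      exact Submodule.subset_span ⟨σ, rfl⟩
    · rw [hForth σ τ hστ]
      exact Submodule.zero_mem _
  have hPtop : P = ⊤ := by
    have hSP : S ⊆ (P : Set A) := by
      intro x hx
      have hxs : x ∈ s := by rwa [hSs] at hx
      have : x = e ⟨x, hxs⟩ := rfl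
      rw [this]
      have : e ⟨x, hxs⟩ = ∑ σ : ι → Bool, if σ ⟨x, hxs⟩ then F σ else 0 := by
        calc e ⟨x, hxs⟩ = e ⟨x, hxs⟩ * 1 := (mul_one _).symm
        _ = e ⟨x, hxs⟩ * ∑ σ : ι → Bool, F σ := by rw [hFsum]
        _ = ∑ σ : ι → Bool, e ⟨x, hxs⟩ * F σ := Finset.mul_sum _ _ _
        _ = ∑ σ : ι → Bool, if σ ⟨x, hxs⟩ then F σ else 0 := by
            exact Finset.sum_congr rfl fun σ _ => heF _ σ
      rw [this]
      refine Submodule.sum_mem _ fun σ _ => ?_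
      by_cases h : σ ⟨x, hxs⟩
      · simp only [h, if_true]; exact Submodule.subset_span ⟨σ, rfl⟩
      · simp only [h, if_false]; exact Submodule.zero_mem _
    set Salg : Subalgebra κ A := P.toSubalgebra h1P hmulP with hSalg
    have hle : Algebra.adjoin κ S ≤ Salg := Algebra.adjoin_le fun x hx => hSP hx
    rw [hgen] at hle
    have : Salg = ⊤ := top_le_iff.mp hle
    have := congrArg Subalgebra.toSubmodule this
    rwa [Algebra.top_toSubmodule] at this
  -- construct the basis
  set T : Finset (ι → Bool) := Finset.univ.filter (fun σ => F σ ≠ 0) with hT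
  let g : T → A := fun t => F t.1
  have hgne : ∀ t : T, g t ≠ 0 := fun t => (Finset.mem_filter.mp t.2).2
  have hli : LinearIndependent κ g := by
    rw [linearIndependent_iff']
    intro u c hc i hi
    have h0 : (∑ j ∈ u, c j • g j) * g i = 0 := by rw [hc, zero_mul]
    rw [Finset.sum_mul] at h0
    have h0' : ∑ j ∈ u, c j • (g j * g i) = 0 := by
      simpa [smul_mul_assoc] using h0
    have hsingle : ∑ j ∈ u, c j • (g j * g i) = c i • g i := by
      rw [Finset.sum_eq_single i]
      · rw [(hFidem i.1).eq]
      · intro j _ hji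
        have : (j : ι → Bool) ≠ (i : ι → Bool) := fun h => hji (Subtype.ext h)
        rw [hForth _ _ this, smul_zero]
      · intro h; exact absurd hi h
    rw [hsingle] at h0'
    rcases smul_eq_zero.mp h0' with h | h
    · exact h
    · exact absurd h (hgne i)
  have hsp : ⊤ ≤ Submodule.span κ (Set.range g) := by
    rw [← hPtop, hP, Submodule.span_le]
    rintro x ⟨σ, rfl⟩
    by_cases h : F σ = 0
    · rw [h]; exact Submodule.zero_mem _
    · have hσT : σ ∈ T := Finset.mem_filter.mpr ⟨Finset.mem_univ _, h⟩
      exact Submodule.subset_span ⟨⟨σ, hσT⟩, rfl⟩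
  let b0 : Module.Basis T κ A := Module.Basis.mk hli hsp
  let b : Module.Basis (Fin T.card) κ A := b0.reindex T.equivFin
  refine ⟨T.card, b, ?_, ?_, ?_⟩
  · intro i
    show IsIdempotentElem (b i)
    rw [show b i = g (T.equivFin.symm i) by
      simp [b, b0, Module.Basis.reindex_apply, Module.Basis.mk_apply]]
    exact hFidem _
  · intro i j hij
    have hb : ∀ k, b k = g (T.equivFin.symm k) := fun k => by
      simp [b, b0, Module.Basis.reindex_apply, Module.Basis.mk_apply]
    rw [hb i, hb j]
    refine hForth _ _ ?_
    intro h
    exact hij (by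
      have : T.equivFin.symm i = T.equivFin.symm j := Subtype.ext h
      exact T.equivFin.symm.injective.eq_iff.mp this ▸ rfl)
  · have hb : ∀ k, b k = g (T.equivFin.symm k) := fun k => by
      simp [b, b0, Module.Basis.reindex_apply, Module.Basis.mk_apply]
    calc ∑ i, b i = ∑ i, g (T.equivFin.symm i) := Finset.sum_congr rfl fun i _ => hb i
    _ = ∑ t : T, g t := Equiv.sum_comp T.equivFin.symm g
    _ = ∑ σ ∈ T, F σ := Finset.sum_attach T (fun σ => F σ)
    _ = ∑ σ ∈ Finset.univ, F σ := by
        rw [hT]; exact Finset.sum_filter_ne_zero _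
    _ = 1 := hFsum
end

section
/- Let G be a group, κ a field, κ_par G the partial group algebra, B ⊆ κ_par G the commutative subalgebra generated by the idempotents e_g = [g][g⁻¹], W a set of idempotents in B, and 𝒲 the two-sided ideal of κ_par G generated by W. Then for every left ideal I of κ_par G one has 𝒲 ∩ I = 𝒲·I; consequently κ_par G/𝒲 is flat as a right κ_par G-module. -/
/-- The defining relations of the partial group algebra `κ_par G = κ S(G)`:
`[g⁻¹][g][h] = [g⁻¹][gh]`, `[g][h][h⁻¹] = [gh][h⁻¹]`, `[g][1] = [1][g] = [g]`. -/
inductive PGARel (κ : Type) (G : Type) [Field κ] [Group G] :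
    FreeAlgebra κ G → FreeAlgebra κ G → Prop
  | left (g h : G) :
      PGARel κ G (FreeAlgebra.ι κ g⁻¹ * FreeAlgebra.ι κ g * FreeAlgebra.ι κ h)
        (FreeAlgebra.ι κ g⁻¹ * FreeAlgebra.ι κ (g * h))
  | right (g h : G) :
      PGARel κ G (FreeAlgebra.ι κ g * FreeAlgebra.ι κ h * FreeAlgebra.ι κ h⁻¹)
        (FreeAlgebra.ι κ (g * h) * FreeAlgebra.ι κ h⁻¹)
  | mul_one (g : G) :
      PGARel κ G (FreeAlgebra.ι κ g * FreeAlgebra.ι κ 1) (FreeAlgebra.ι κ g)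
  | one_mul (g : G) :
      PGARel κ G (FreeAlgebra.ι κ 1 * FreeAlgebra.ι κ g) (FreeAlgebra.ι κ g)

/-- The partial group algebra `κ_par G`. -/
abbrev PartialGroupAlgebra (κ : Type) (G : Type) [Field κ] [Group G] : Type :=
  RingQuot (PGARel κ G)

/-- The canonical generator `[g]` of `κ_par G`. -/
def pgaGen (κ : Type) (G : Type) [Field κ] [Group G] (g : G) :
    PartialGroupAlgebra κ G :=
  RingQuot.mkAlgHom κ (PGARel κ G) (FreeAlgebra.ι κ g)

/-- The idempotent `e_g = [g][g⁻¹]` of `κ_par G`. -/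
def pgaIdem (κ : Type) (G : Type) [Field κ] [Group G] (g : G) :
    PartialGroupAlgebra κ G :=
  pgaGen κ G g * pgaGen κ G g⁻¹

/-- The commutative subalgebra `B ⊆ κ_par G` generated by the idempotents `e_g`. -/
def pgaB (κ : Type) (G : Type) [Field κ] [Group G] :
    Subalgebra κ (PartialGroupAlgebra κ G) :=
  Algebra.adjoin κ (Set.range (pgaIdem κ G))

section RightFlat

variable (R : Type*) [Ring R] (M : Type*) [AddCommGroup M] [Module Rᵐᵒᵖ M]

/-- The left `R`-module structure on the character module `M⋆ = Hom_ℤ(M, ℚ/ℤ)` of a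
right `R`-module `M`, given by `(r • c)(m) = c(m·r)`. -/
noncomputable instance characterModuleLeftModule : Module R (CharacterModule M) where
  smul r c := c.comp (AddMonoidHom.mk' (fun x => MulOpposite.op r • x) fun a b => smul_add _ a b)
  one_smul c := DFunLike.ext _ _ fun x => by
    show c (MulOpposite.op (1 : R) • x) = c x
    rw [MulOpposite.op_one, one_smul]
  mul_smul r s c := DFunLike.ext _ _ fun x => by
    show c (MulOpposite.op (r * s) • x) = c (MulOpposite.op s • MulOpposite.op r • x)
    rw [MulOpposite.op_mul, mul_smul]
  smul_zero r := DFunLike.ext _ _ fun x => rfl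
  smul_add r c d := DFunLike.ext _ _ fun x => rfl
  add_smul r s c := DFunLike.ext _ _ fun x => by
    show c (MulOpposite.op (r + s) • x) =
      c (MulOpposite.op r • x) + c (MulOpposite.op s • x)
    rw [MulOpposite.op_add, add_smul, map_add]
  zero_smul c := DFunLike.ext _ _ fun x => by
    show c (MulOpposite.op (0 : R) • x) = 0
    rw [MulOpposite.op_zero, zero_smul, map_zero]

/-- A right `R`-module `M` is flat iff its character module `M⋆ = Hom_ℤ(M, ℚ/ℤ)` is an
injective left `R`-module (Lambek's criterion); we take this as the definition of
flatness for right modules over a (possibly noncommutative) ring. -/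
def RightModuleFlat : Prop :=
  Module.Injective R (CharacterModule M)

end RightFlat

/-!
Every element `x` of the ideal `𝒲` has a local left unit: an idempotent `e ∈ 𝒲 ∩ B` with
`e x = x`. For `x = w ∈ W` take `e = w`. Elements with such a unit are closed under sums, since
two idempotents of the commutative algebra `B` have the common left unit `e₁ + e₂ - e₁ e₂`, and
under left multiplication by a generator `[g]`, since for an idempotent `f ∈ 𝒲 ∩ B` the conjugate
`[g] f [g⁻¹]` is again an idempotent of `𝒲 ∩ B`, and it fixes `[g] f` because
`[g⁻¹][g] = e_{g⁻¹}` lies in `B`.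

Local left units give `𝒲 ∩ I ⊆ 𝒲 I` at once. They also give flatness through Baer's criterion
for the character module: writing `R = κ_par G`, for `g : I → (R/𝒲)⋆` the character
`i ↦ g(i)(1̄)` of `I` vanishes on `I ∩ 𝒲`, the kernel of `I → R/𝒲`, so it extends to `R/𝒲`
because `ℚ/ℤ` is divisible.
-/

open MulOpposite

section RingTheory

variable {R : Type*} [Ring R]

theorem TwoSidedIdeal.asIdeal_span (s : Set R) :
    (TwoSidedIdeal.span s).asIdeal = Ideal.span {x | ∃ w ∈ s, ∃ a b : R, x = a * w * b} := by
  apply le_antisymm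
  · intro x hx
    rw [TwoSidedIdeal.mem_asIdeal, TwoSidedIdeal.mem_span_iff_mem_addSubgroup_closure] at hx
    refine (AddSubgroup.closure_le (Ideal.span _).toAddSubgroup).mpr ?_ hx
    rintro _ ⟨_, ⟨a, -, w, hw, rfl⟩, b, -, rfl⟩
    exact Ideal.subset_span ⟨w, hw, a, b, rfl⟩
  · rw [Ideal.span_le]
    rintro _ ⟨w, hw, a, b, rfl⟩
    exact TwoSidedIdeal.mem_asIdeal.mpr <|
      mul_mem_right _ _ _ <| mul_mem_left _ _ _ <| TwoSidedIdeal.subset_span hw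

theorem TwoSidedIdeal.asIdealOpposite_span (s : Set R) :
    (TwoSidedIdeal.span s).asIdealOpposite =
      Ideal.span {x : Rᵐᵒᵖ | ∃ w ∈ s, ∃ a b : Rᵐᵒᵖ, x = a * MulOpposite.op w * b} := by
  apply le_antisymm
  · intro x hx
    obtain ⟨y, rfl⟩ : ∃ y, MulOpposite.op y = x := ⟨x.unop, op_unop x⟩
    rw [TwoSidedIdeal.mem_asIdealOpposite, unop_op,
      TwoSidedIdeal.mem_span_iff_mem_addSubgroup_closure] at hx
    induction hx using AddSubgroup.closure_induction with
    | mem _ h =>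
      obtain ⟨_, ⟨a, -, w, hw, rfl⟩, b, -, rfl⟩ := h
      exact Ideal.subset_span ⟨w, hw, MulOpposite.op b, MulOpposite.op a, by simp [mul_assoc]⟩
    | zero => exact Submodule.zero_mem _
    | add _ _ _ _ hy hz => rw [op_add]; exact Submodule.add_mem _ hy hz
    | neg _ _ hy => rw [op_neg]; exact Submodule.neg_mem _ hy
  · rw [Ideal.span_le]
    rintro _ ⟨w, hw, a, b, rfl⟩
    refine TwoSidedIdeal.mem_asIdealOpposite.mpr ?_
    simpa [mul_assoc] using
      mul_mem_right _ _ _ <| mul_mem_left _ _ _ <| TwoSidedIdeal.subset_span hw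

theorem Ideal.inf_eq_span_mul_of_forall_exists_mul_eq_self {J : Ideal R} [J.IsTwoSided]
    (hJ : ∀ x ∈ J, ∃ e ∈ J, e * x = x) (I : Ideal R) :
    J ⊓ I = Ideal.span {x | ∃ w ∈ J, ∃ i ∈ I, x = w * i} := by
  apply le_antisymm
  · rintro x ⟨hxJ, hxI⟩
    obtain ⟨e, heJ, hex⟩ := hJ x hxJ
    exact Ideal.subset_span ⟨e, heJ, x, hxI, hex.symm⟩
  · rw [Ideal.span_le]
    rintro _ ⟨w, hw, i, hi, rfl⟩
    exact ⟨J.mul_mem_right i hw, I.mul_mem_left w hi⟩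

end RingTheory

theorem CharacterModule.exists_apply_eq_of_forall_eq_zero {A B : Type*} [AddCommGroup A]
    [AddCommGroup B] (f : A →+ B) (ψ : CharacterModule A) (h : ∀ a, f a = 0 → ψ a = 0) :
    ∃ χ : CharacterModule B, ∀ a, χ (f a) = ψ a := by
  let K := LinearMap.ker f.toIntLinearMap
  have hK : K ≤ LinearMap.ker (ψ : A →+ _).toIntLinearMap := fun a ha => h a ha
  obtain ⟨χ, hχ⟩ := CharacterModule.dual_surjective_of_injective (K.liftQ _ le_rfl)
    (LinearMap.ker_eq_bot.mp (K.ker_liftQ_eq_bot _ _ le_rfl))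
    (K.liftQ _ hK).toAddMonoidHom
  exact ⟨χ, fun a => DFunLike.congr_fun hχ (Submodule.Quotient.mk a)⟩

section RightFlat

variable {R : Type*} [Ring R] {J : Submodule Rᵐᵒᵖ Rᵐᵒᵖ}

theorem characterModule_smul_apply {M : Type*} [AddCommGroup M] [Module Rᵐᵒᵖ M] (r : R)
    (c : CharacterModule M) (m : M) : (r • c) m = c (op r • m) :=
  rfl

theorem LinearMap.map_smul_apply_mkQ_one {I : Ideal R}
    (g : I →ₗ[R] CharacterModule (Rᵐᵒᵖ ⧸ J)) (r : R) (i : I) :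
    g (r • i) (J.mkQ 1) = g i (J.mkQ (op r)) := by
  rw [map_smul, characterModule_smul_apply, ← map_smul, smul_eq_mul, mul_one]

theorem rightModuleFlat_quotient_of_forall_exists_mul_eq_self
    (hJ : ∀ x : R, op x ∈ J → ∃ e : R, op e ∈ J ∧ e * x = x) :
    RightModuleFlat R (Rᵐᵒᵖ ⧸ J) := by
  refine Module.Baer.injective fun I g => ?_
  let θ : I →+ Rᵐᵒᵖ ⧸ J := J.mkQ.toAddMonoidHom.comp <|
    (opAddEquiv : R ≃+ Rᵐᵒᵖ).toAddMonoidHom.comp I.subtype.toAddMonoidHom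
  let ψ : CharacterModule I := AddMonoidHom.mk' (fun i => g i (J.mkQ 1)) fun i j => by
    rw [map_add]; rfl
  obtain ⟨χ, hχ⟩ := CharacterModule.exists_apply_eq_of_forall_eq_zero θ ψ fun i hi => by
    obtain ⟨e, he, hei⟩ := hJ i ((Submodule.Quotient.mk_eq_zero J).mp hi)
    have : e • i = i := Subtype.ext hei
    show g i (J.mkQ 1) = 0
    rw [← this, g.map_smul_apply_mkQ_one, Submodule.mkQ_apply,
      (Submodule.Quotient.mk_eq_zero J).mpr he, map_zero]
  refine ⟨LinearMap.toSpanSingleton R _ χ, fun x hx => ?_⟩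
  ext m
  obtain ⟨y, rfl⟩ := J.mkQ_surjective m
  have hyx : y.unop • (⟨x, hx⟩ : I) = ⟨y.unop * x, I.mul_mem_left _ hx⟩ := rfl
  calc χ (op x • J.mkQ y) = χ (θ (y.unop • ⟨x, hx⟩)) := by
        rw [← map_smul, smul_eq_mul, hyx]; rfl
    _ = g ⟨x, hx⟩ (J.mkQ y) := by
        rw [hχ]; exact g.map_smul_apply_mkQ_one y.unop ⟨x, hx⟩

end RightFlat

section IdempotentLeftUnit

variable {R : Type*} [Ring R]

def HasIdempotentLeftUnit {S : Type*} [SetLike S R] (J : Ideal R) (B : S) (x : R) : Prop :=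
  ∃ e ∈ J, e ∈ B ∧ IsIdempotentElem e ∧ e * x = x

variable {S : Type*} [SetLike S R] {J : Ideal R} {B : S}

theorem HasIdempotentLeftUnit.of_isIdempotentElem {e : R} (hJ : e ∈ J) (hB : e ∈ B)
    (he : IsIdempotentElem e) : HasIdempotentLeftUnit J B e :=
  ⟨e, hJ, hB, he, he⟩

theorem HasIdempotentLeftUnit.zero [SubringClass S R] : HasIdempotentLeftUnit J B 0 :=
  .of_isIdempotentElem J.zero_mem (zero_mem B) .zero

theorem HasIdempotentLeftUnit.neg {x : R} (hx : HasIdempotentLeftUnit J B x) :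
    HasIdempotentLeftUnit J B (-x) :=
  let ⟨e, hJ, hB, he, hex⟩ := hx
  ⟨e, hJ, hB, he, by rw [mul_neg, hex]⟩

theorem HasIdempotentLeftUnit.mul_right {x : R} (hx : HasIdempotentLeftUnit J B x) (r : R) :
    HasIdempotentLeftUnit J B (x * r) :=
  let ⟨e, hJ, hB, he, hex⟩ := hx
  ⟨e, hJ, hB, he, by rw [← mul_assoc, hex]⟩

theorem HasIdempotentLeftUnit.mul_left {r x : R}
    (hr : ∀ e ∈ J, e ∈ B → IsIdempotentElem e → HasIdempotentLeftUnit J B (r * e))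
    (hx : HasIdempotentLeftUnit J B x) : HasIdempotentLeftUnit J B (r * x) := by
  obtain ⟨e, hJ, hB, he, hex⟩ := hx
  obtain ⟨e', hJ', hB', he', hre⟩ := hr e hJ hB he
  refine ⟨e', hJ', hB', he', ?_⟩
  calc e' * (r * x) = e' * (r * e) * x := by rw [mul_assoc, mul_assoc, hex]
    _ = r * x := by rw [hre, mul_assoc, hex]

theorem HasIdempotentLeftUnit.add [SubringClass S R] (hB : ∀ a ∈ B, ∀ b ∈ B, Commute a b)
    {x y : R} (hx : HasIdempotentLeftUnit J B x) (hy : HasIdempotentLeftUnit J B y) :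
    HasIdempotentLeftUnit J B (x + y) := by
  obtain ⟨e₁, hJ₁, hB₁, he₁, hx⟩ := hx
  obtain ⟨e₂, hJ₂, hB₂, he₂, hy⟩ := hy
  have hc : Commute e₁ e₂ := hB e₁ hB₁ e₂ hB₂
  refine ⟨e₁ + e₂ - e₁ * e₂, sub_mem (add_mem hJ₁ hJ₂) (J.mul_mem_left e₁ hJ₂),
    sub_mem (add_mem hB₁ hB₂) (mul_mem hB₁ hB₂), he₁.add_sub_mul_of_commute hc he₂, ?_⟩
  calc (e₁ + e₂ - e₁ * e₂) * (x + y)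
      = e₁ * x + e₂ * y + (e₂ * x - e₂ * (e₁ * x)) + (e₁ * y - e₁ * (e₂ * y)) := by
        rw [← mul_assoc e₂, ← hc.eq]; noncomm_ring
    _ = x + y := by rw [hx, hy, sub_self, sub_self, add_zero, add_zero]

theorem HasIdempotentLeftUnit.mul_of_adjoin_eq_top [SubringClass S R] {κ : Type*}
    [CommSemiring κ] [Algebra κ R] (hB : ∀ a ∈ B, ∀ b ∈ B, Commute a b) {s : Set R}
    (hs : Algebra.adjoin κ s = ⊤)
    (hgen : ∀ t ∈ s, ∀ e ∈ J, e ∈ B → IsIdempotentElem e → HasIdempotentLeftUnit J B (t * e))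
    (r : R) : ∀ e ∈ J, e ∈ B → IsIdempotentElem e → HasIdempotentLeftUnit J B (r * e) := by
  have hr : r ∈ Algebra.adjoin κ s := hs ▸ Algebra.mem_top
  induction hr using Algebra.adjoin_induction with
  | mem t ht => exact hgen t ht
  | algebraMap c =>
    intro e heJ heB he
    rw [Algebra.commutes]
    exact (HasIdempotentLeftUnit.of_isIdempotentElem heJ heB he).mul_right _
  | add _ _ _ _ h₁ h₂ =>
    intro e heJ heB he
    rw [add_mul]
    exact (h₁ e heJ heB he).add hB (h₂ e heJ heB he)
  | mul _ _ _ _ h₁ h₂ =>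
    intro e heJ heB he
    rw [mul_assoc]
    exact (h₂ e heJ heB he).mul_left h₁

end IdempotentLeftUnit

namespace PartialGroupAlgebra

variable {κ G : Type} [Field κ] [Group G]

theorem pgaGen_inv_mul_gen_mul (g h : G) :
    pgaGen κ G g⁻¹ * pgaGen κ G g * pgaGen κ G h = pgaGen κ G g⁻¹ * pgaGen κ G (g * h) := by
  simpa [pgaGen] using RingQuot.mkAlgHom_rel κ (PGARel.left (κ := κ) g h)

theorem pgaGen_mul_gen_mul_gen_inv (g h : G) :
    pgaGen κ G g * pgaGen κ G h * pgaGen κ G h⁻¹ = pgaGen κ G (g * h) * pgaGen κ G h⁻¹ := by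
  simpa [pgaGen] using RingQuot.mkAlgHom_rel κ (PGARel.right (κ := κ) g h)

theorem pgaGen_one_mul (g : G) : pgaGen κ G 1 * pgaGen κ G g = pgaGen κ G g := by
  simpa [pgaGen] using RingQuot.mkAlgHom_rel κ (PGARel.one_mul (κ := κ) g)

theorem pgaGen_inv_mul_gen (g : G) : pgaGen κ G g⁻¹ * pgaGen κ G g = pgaIdem κ G g⁻¹ := by
  rw [pgaIdem, inv_inv]

theorem pgaIdem_mul_gen (g : G) : pgaIdem κ G g * pgaGen κ G g = pgaGen κ G g := by
  have h := pgaGen_mul_gen_mul_gen_inv (κ := κ) g g⁻¹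
  rw [inv_inv, mul_inv_cancel] at h
  rw [pgaIdem, h, pgaGen_one_mul]

theorem pgaGen_mul_idem_inv (g : G) : pgaGen κ G g * pgaIdem κ G g⁻¹ = pgaGen κ G g := by
  rw [← pgaGen_inv_mul_gen, ← mul_assoc]
  exact pgaIdem_mul_gen g

theorem pgaGen_mul_idem (g h : G) :
    pgaGen κ G g * pgaIdem κ G h = pgaIdem κ G (g * h) * pgaGen κ G g := by
  have h₁ := pgaGen_mul_gen_mul_gen_inv (κ := κ) g h
  have h₂ := pgaGen_inv_mul_gen_mul (κ := κ) (g * h)⁻¹ g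
  rw [inv_inv, show (g * h)⁻¹ * g = h⁻¹ by group] at h₂
  rw [pgaIdem, pgaIdem, ← mul_assoc, h₁, h₂]

theorem commute_pgaIdem (g h : G) : Commute (pgaIdem κ G g) (pgaIdem κ G h) := by
  have h₁ := pgaGen_mul_idem (κ := κ) h (h⁻¹ * g)
  have h₂ := pgaGen_mul_idem (κ := κ) h⁻¹ g
  rw [mul_inv_cancel_left] at h₁
  show pgaIdem κ G g * (pgaGen κ G h * pgaGen κ G h⁻¹) =
    (pgaGen κ G h * pgaGen κ G h⁻¹) * pgaIdem κ G g
  rw [← mul_assoc, ← h₁, mul_assoc, ← h₂, ← mul_assoc]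

theorem pgaIdem_mem_pgaB (g : G) : pgaIdem κ G g ∈ pgaB κ G :=
  Algebra.subset_adjoin ⟨g, rfl⟩

theorem pgaB_commute {a b : PartialGroupAlgebra κ G} (ha : a ∈ pgaB κ G) (hb : b ∈ pgaB κ G) :
    Commute a b :=
  have hle := Algebra.adjoin_le_centralizer_centralizer κ (Set.range (pgaIdem κ G))
  Set.centralizer_centralizer_comm_of_comm
    (by rintro _ ⟨g, rfl⟩ _ ⟨h, rfl⟩; exact (commute_pgaIdem g h).eq) _ (hle ha) _ (hle hb)

theorem pgaGen_conj_mul_conj (g : G) (a : PartialGroupAlgebra κ G) {b : PartialGroupAlgebra κ G}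
    (hb : b ∈ pgaB κ G) :
    pgaGen κ G g * a * pgaGen κ G g⁻¹ * (pgaGen κ G g * b * pgaGen κ G g⁻¹) =
      pgaGen κ G g * (a * b) * pgaGen κ G g⁻¹ := by
  calc _ = pgaGen κ G g * a * ((pgaGen κ G g⁻¹ * pgaGen κ G g) * b) * pgaGen κ G g⁻¹ := by
        noncomm_ring
    _ = pgaGen κ G g * (a * b) * (pgaIdem κ G g⁻¹ * pgaGen κ G g⁻¹) := by
        rw [pgaGen_inv_mul_gen, (pgaB_commute (pgaIdem_mem_pgaB g⁻¹) hb).eq]; noncomm_ring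
    _ = _ := by rw [pgaIdem_mul_gen]

theorem pgaGen_conj_mem_pgaB (g : G) {a : PartialGroupAlgebra κ G} (ha : a ∈ pgaB κ G) :
    pgaGen κ G g * a * pgaGen κ G g⁻¹ ∈ pgaB κ G := by
  induction ha using Algebra.adjoin_induction with
  | mem _ hx =>
    obtain ⟨h, rfl⟩ := hx
    rw [pgaGen_mul_idem, mul_assoc]
    exact mul_mem (pgaIdem_mem_pgaB _) (pgaIdem_mem_pgaB g)
  | algebraMap c =>
    rw [← Algebra.commutes, mul_assoc]
    exact mul_mem (Subalgebra.algebraMap_mem _ c) (pgaIdem_mem_pgaB g)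
  | add _ _ _ _ h₁ h₂ =>
    rw [mul_add, add_mul]
    exact add_mem h₁ h₂
  | mul _ _ _ hb h₁ h₂ =>
    rw [← pgaGen_conj_mul_conj g _ hb]
    exact mul_mem h₁ h₂

theorem pgaGen_conj_mul_pgaGen_mul {f : PartialGroupAlgebra κ G} (hf : f ∈ pgaB κ G)
    (hf' : IsIdempotentElem f) (g : G) :
    pgaGen κ G g * f * pgaGen κ G g⁻¹ * (pgaGen κ G g * f) = pgaGen κ G g * f := by
  calc _ = pgaGen κ G g * (f * (pgaGen κ G g⁻¹ * pgaGen κ G g) * f) := by noncomm_ring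
    _ = pgaGen κ G g * pgaIdem κ G g⁻¹ * (f * f) := by
        rw [pgaGen_inv_mul_gen, (pgaB_commute hf (pgaIdem_mem_pgaB g⁻¹)).eq]; noncomm_ring
    _ = _ := by rw [pgaGen_mul_idem_inv, hf'.eq]

theorem adjoin_range_pgaGen : Algebra.adjoin κ (Set.range (pgaGen κ G)) = ⊤ := by
  rw [show pgaGen κ G = RingQuot.mkAlgHom κ (PGARel κ G) ∘ FreeAlgebra.ι κ from rfl,
    Set.range_comp, Algebra.adjoin_image, FreeAlgebra.adjoin_range_ι, Algebra.map_top,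
    AlgHom.range_eq_top]
  exact RingQuot.mkAlgHom_surjective κ (PGARel κ G)

theorem hasIdempotentLeftUnit_pgaGen_mul (J : Ideal (PartialGroupAlgebra κ G)) [J.IsTwoSided]
    (g : G) {f : PartialGroupAlgebra κ G} (hfJ : f ∈ J) (hfB : f ∈ pgaB κ G)
    (hf : IsIdempotentElem f) :
    HasIdempotentLeftUnit J (pgaB κ G) (pgaGen κ G g * f) := by
  have habsorb := pgaGen_conj_mul_pgaGen_mul hfB hf g
  refine ⟨_, J.mul_mem_right _ (J.mul_mem_left _ hfJ), pgaGen_conj_mem_pgaB g hfB, ?_, habsorb⟩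
  rw [IsIdempotentElem, ← mul_assoc _ (pgaGen κ G g * f), habsorb]

theorem hasIdempotentLeftUnit_of_mem_span {W : Set (PartialGroupAlgebra κ G)}
    (hWB : ∀ w ∈ W, w ∈ pgaB κ G) (hWidem : ∀ w ∈ W, w * w = w)
    {x : PartialGroupAlgebra κ G} (hx : x ∈ TwoSidedIdeal.span W) :
    HasIdempotentLeftUnit (TwoSidedIdeal.span W).asIdeal (pgaB κ G) x := by
  have hgen : ∀ r : PartialGroupAlgebra κ G, ∀ e ∈ (TwoSidedIdeal.span W).asIdeal,
      e ∈ pgaB κ G → IsIdempotentElem e →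
      HasIdempotentLeftUnit (TwoSidedIdeal.span W).asIdeal (pgaB κ G) (r * e) :=
    HasIdempotentLeftUnit.mul_of_adjoin_eq_top (fun _ ha _ hb => pgaB_commute ha hb)
      adjoin_range_pgaGen fun _ ⟨g, hg⟩ _ hJ hB he =>
        hg ▸ hasIdempotentLeftUnit_pgaGen_mul _ g hJ hB he
  induction hx using TwoSidedIdeal.span_induction with
  | mem w hw =>
    exact .of_isIdempotentElem (TwoSidedIdeal.mem_asIdeal.mpr (TwoSidedIdeal.subset_span hw))
      (hWB w hw) (hWidem w hw)
  | zero => exact .zero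
  | add _ _ _ _ hx hy => exact hx.add (fun _ ha _ hb => pgaB_commute ha hb) hy
  | neg _ _ hx => exact hx.neg
  | left_absorb r _ _ hx => exact hx.mul_left (hgen r)
  | right_absorb r _ _ hx => exact hx.mul_right r

theorem exists_mul_eq_self_of_mem_span {W : Set (PartialGroupAlgebra κ G)}
    (hWB : ∀ w ∈ W, w ∈ pgaB κ G) (hWidem : ∀ w ∈ W, w * w = w) :
    ∀ x ∈ (TwoSidedIdeal.span W).asIdeal, ∃ e ∈ (TwoSidedIdeal.span W).asIdeal, e * x = x :=
  fun _ hx => by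
    obtain ⟨e, he, -, -, hex⟩ :=
      hasIdempotentLeftUnit_of_mem_span hWB hWidem (TwoSidedIdeal.mem_asIdeal.mp hx)
    exact ⟨e, he, hex⟩

end PartialGroupAlgebra

open MulOpposite in
/-- Let `W` be a set of idempotents in the subalgebra `B` of the
partial group algebra `κ_par G` and `𝒲` the two-sided ideal generated by `W`.  Then for
every left ideal `I` one has `𝒲 ∩ I = 𝒲·I`; consequently `κ_par G/𝒲` is flat as a right
`κ_par G`-module (the latter realized as the left `(κ_par G)ᵐᵒᵖ`-module `(κ_par G)ᵐᵒᵖ/𝒲ᵒᵖ`). -/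
theorem partialGroupAlgebra_quotient_by_idempotent_ideal_flat
    {κ G : Type} [Field κ] [Group G]
    (W : Set (PartialGroupAlgebra κ G))
    (hWB : ∀ w ∈ W, w ∈ pgaB κ G)
    (hWidem : ∀ w ∈ W, w * w = w) :
    (∀ I : Ideal (PartialGroupAlgebra κ G),
      (Ideal.span {x | ∃ w ∈ W, ∃ a b : PartialGroupAlgebra κ G, x = a * w * b}) ⊓ I =
      Ideal.span {x | ∃ w ∈ Ideal.span
          {x | ∃ w ∈ W, ∃ a b : PartialGroupAlgebra κ G, x = a * w * b},
        ∃ i ∈ I, x = w * i}) ∧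
    RightModuleFlat (PartialGroupAlgebra κ G)
      ((PartialGroupAlgebra κ G)ᵐᵒᵖ ⧸
        (Ideal.span {x : (PartialGroupAlgebra κ G)ᵐᵒᵖ |
          ∃ w ∈ W, ∃ a b : (PartialGroupAlgebra κ G)ᵐᵒᵖ, x = a * op w * b} :
          Submodule (PartialGroupAlgebra κ G)ᵐᵒᵖ (PartialGroupAlgebra κ G)ᵐᵒᵖ)) := by
  have hunit := PartialGroupAlgebra.exists_mul_eq_self_of_mem_span hWB hWidem
  rw [← TwoSidedIdeal.asIdeal_span, ← TwoSidedIdeal.asIdealOpposite_span]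
  refine ⟨Ideal.inf_eq_span_mul_of_forall_exists_mul_eq_self hunit,
    rightModuleFlat_quotient_of_forall_exists_mul_eq_self fun x hx => ?_⟩
  simp only [TwoSidedIdeal.mem_asIdealOpposite, unop_op, ← TwoSidedIdeal.mem_asIdeal] at hx ⊢
  exact hunit x hx
end
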